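/- arXiv:2209.14476 — 8 statements merged into one kernel-verified Lean document; each statement's English description precedes it below -/
import Mathlib

section
/- For the fan graph F_{n-1} = K_1 ⊕ P_{n-1} (the join of a single vertex with a path on n-1 vertices), where n ≥ 5, the general position number equals ⌊2n/3⌋. -/
open SimpleGraph

/-- A general position set: no vertex of `S` lies on a geodesic between two
other vertices of `S`. -/
def IsGPSet {V : Type*} (G : SimpleGraph V) (S : Set V) : Prop :=
  ∀ ⦃u v w : V⦄, u ∈ S → v ∈ S → w ∈ S → u ≠ v → v ≠ w → u ≠ w →
    G.dist u w ≠ G.dist u v + G.dist v w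

/-- The general position number of a graph. -/
noncomputable def gpNumber {V : Type*} (G : SimpleGraph V) : ℕ :=
  sSup {k | ∃ S : Set V, IsGPSet G S ∧ S.ncard = k}

/-- Degree of a vertex (as the cardinality of its neighborhood). -/
noncomputable def degSet {V : Type*} (G : SimpleGraph V) (v : V) : ℕ :=
  (G.neighborSet v).ncard

/-- Maximum degree of a graph on `Fin n`. -/
noncomputable def maxDeg {n : ℕ} (G : SimpleGraph (Fin n)) : ℕ :=
  Finset.univ.sup (fun v => degSet G v)

/-- `x` lies strictly (clockwise) between `a` and `b` on the cycle `Fin n`. -/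
def StrictBtw {n : ℕ} (a x b : Fin n) : Prop :=
  0 < (x - a).val ∧ (x - a).val < (b - a).val

/-- Chords `ab` and `cd` of the cycle `Fin n` cross each other. -/
def Crossing {n : ℕ} (a b c d : Fin n) : Prop :=
  StrictBtw a c b ∧ StrictBtw b d a

/-- `G` is a maximal outerplanar (outerplane) graph, presented with its unique
Hamiltonian cycle `0, 1, …, n-1`: all chords are pairwise non-crossing, and no
further non-crossing chord can be added (a triangulation of an `n`-gon). -/
def IsMOPFin (n : ℕ) [NeZero n] (G : SimpleGraph (Fin n)) : Prop :=
  3 ≤ n ∧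
  (∀ i : Fin n, G.Adj i (i + 1)) ∧
  (∀ a b c d : Fin n, G.Adj a b → G.Adj c d → ¬ Crossing a b c d) ∧
  (∀ a b : Fin n, a ≠ b → ¬ G.Adj a b → ∃ c d : Fin n, G.Adj c d ∧ Crossing a b c d)

/-- The internal triangles of a maximal outerplane graph on `Fin n`:
triangles none of whose edges lies on the Hamiltonian cycle. -/
def InternalTriangles (n : ℕ) [NeZero n] (G : SimpleGraph (Fin n)) : Set (Finset (Fin n)) :=
  {T | T.card = 3 ∧ (∀ a ∈ T, ∀ b ∈ T, a ≠ b → G.Adj a b) ∧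
    ∀ a ∈ T, ∀ b ∈ T, b ≠ a + 1}

/-- The fan graph `F_m = K₁ ⊕ P_m`: the join of the central vertex `none`
with a path on `m` vertices. -/
def fanGraph (m : ℕ) : SimpleGraph (Option (Fin m)) where
  Adj x y :=
    match x, y with
    | none, none => False
    | none, some _ => True
    | some _, none => True
    | some i, some j => i.val + 1 = j.val ∨ j.val + 1 = i.val
  symm := by
    constructor
    intro x y h
    cases x <;> cases y <;> simp_all <;> omega
  loopless := by
    constructor
    intro x h
    cases x <;> simp_all

/-- The straight linear 2-tree: `vᵢ ~ vⱼ` iff `0 < |i - j| ≤ 2`. -/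
def linear2Tree (n : ℕ) : SimpleGraph (Fin n) where
  Adj i j := i ≠ j ∧ i.val ≤ j.val + 2 ∧ j.val ≤ i.val + 2
  symm := by
    constructor
    intro i j h
    exact ⟨h.1.symm, h.2.2, h.2.1⟩
  loopless := by
    constructor
    intro i h
    exact h.1 rfl

/-- The generalized sunflower graph built from a base graph `G0` on the cycle
`h_0 … h_{m-1}` by attaching `x` new vertices `v_0, …, v_{x-1}`,
where `v_i` is joined to `h_i` and `h_{(i+1) mod m}`. -/
def GSF (m x : ℕ) (G0 : SimpleGraph (Fin m)) : SimpleGraph (Fin m ⊕ Fin x) where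
  Adj a b :=
    match a, b with
    | .inl u, .inl v => G0.Adj u v
    | .inl u, .inr i => u.val = i.val ∨ u.val = (i.val + 1) % m
    | .inr i, .inl u => u.val = i.val ∨ u.val = (i.val + 1) % m
    | .inr _, .inr _ => False
  symm := by
    constructor
    intro a b h
    cases a <;> cases b <;> simp_all [SimpleGraph.adj_comm]
  loopless := by
    constructor
    intro a h
    cases a <;> simp_all

/-- `G` contains `K₄` as a minor: there exist four nonempty, pairwise disjoint,
connected branch sets that are pairwise joined by an edge. -/
def HasK4Minor {V : Type*} (G : SimpleGraph V) : Prop :=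
  ∃ B : Fin 4 → Set V,
    (∀ i, (B i).Nonempty) ∧
    (∀ i, (G.induce (B i)).Connected) ∧
    (∀ i j, i ≠ j → Disjoint (B i) (B j)) ∧
    (∀ i j, i ≠ j → ∃ a ∈ B i, ∃ b ∈ B j, G.Adj a b)


/-!
In the fan every two vertices are at distance at most two (through the centre), so a set is in
general position exactly when it contains no induced path `u ~ v ~ w` with `u ≁ w`. If the centre
belongs to such a set, the remaining vertices are pairwise adjacent on the path, so there are at
most two of them. Otherwise the set is a set of path vertices with no three consecutive ones, which
has at most `⌈2(n-1)/3⌉ = ⌊2n/3⌋` elements; the vertices whose index is not `2 mod 3` attain this.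
-/

open SimpleGraph

theorem gpNumber_eq_of_forall_ncard_le {V : Type*} {G : SimpleGraph V} {k : ℕ}
    (hle : ∀ S, IsGPSet G S → S.ncard ≤ k) (hex : ∃ S, IsGPSet G S ∧ S.ncard = k) :
    gpNumber G = k :=
  IsGreatest.csSup_eq ⟨hex, by rintro _ ⟨S, hS, rfl⟩; exact hle S hS⟩

section UniversalVertex

variable {V : Type*} {G : SimpleGraph V} {c : V}

theorem dist_le_one_of_universal (hc : ∀ v, v ≠ c → G.Adj c v) (v : V) : G.dist c v ≤ 1 := by
  by_cases hv : v = c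
  · simp [hv]
  · exact (dist_eq_one_iff_adj.mpr (hc v hv)).le

theorem connected_of_universal (hc : ∀ v, v ≠ c → G.Adj c v) : G.Connected := by
  have hreach : ∀ v, G.Reachable c v := fun v => by
    by_cases hv : v = c
    · exact hv ▸ Reachable.refl (G := G) c
    · exact (hc v hv).reachable
  exact { preconnected := fun u v => (hreach u).symm.trans (hreach v), nonempty := ⟨c⟩ }

theorem dist_le_two_of_universal (hc : ∀ v, v ≠ c → G.Adj c v) (u w : V) : G.dist u w ≤ 2 :=
  calc G.dist u w ≤ G.dist u c + G.dist c w := (connected_of_universal hc).dist_triangle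
    _ ≤ 1 + 1 := by
      rw [dist_comm]
      exact add_le_add (dist_le_one_of_universal hc u) (dist_le_one_of_universal hc w)

theorem isGPSet_iff_of_universal (hc : ∀ v, v ≠ c → G.Adj c v) {S : Set V} :
    IsGPSet G S ↔ ∀ ⦃u v w⦄, u ∈ S → v ∈ S → w ∈ S → u ≠ w →
      G.Adj u v → G.Adj v w → G.Adj u w := by
  have hconn := connected_of_universal hc
  constructor
  · intro hS u v w hu hv hw huw huv hvw
    by_contra hnuw
    have hpos := hconn.pos_dist_of_ne huw
    have hne_one : G.dist u w ≠ 1 := fun h => hnuw (dist_eq_one_iff_adj.mp h)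
    have hle := dist_le_two_of_universal hc u w
    refine hS hu hv hw huv.ne hvw.ne huw ?_
    rw [dist_eq_one_iff_adj.mpr huv, dist_eq_one_iff_adj.mpr hvw]
    omega
  · intro hS u v w hu hv hw huv hvw huw heq
    have := hconn.pos_dist_of_ne huv
    have := hconn.pos_dist_of_ne hvw
    have := dist_le_two_of_universal hc u w
    have huv₁ : G.dist u v = 1 := by omega
    have hvw₁ : G.dist v w = 1 := by omega
    have := dist_eq_one_iff_adj.mpr
      (hS hu hv hw huw (dist_eq_one_iff_adj.mp huv₁) (dist_eq_one_iff_adj.mp hvw₁))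
    omega

end UniversalVertex

theorem ncard_le_of_forall_not_three_consecutive {S : Set ℕ} {m : ℕ} (hS : S ⊆ Set.Iio m)
    (h3 : ∀ x ∈ S, x + 1 ∈ S → x + 2 ∉ S) : S.ncard ≤ (2 * m + 2) / 3 := by
  induction m using Nat.strong_induction_on generalizing S with
  | _ m ih =>
  rcases lt_or_ge m 3 with hm | hm
  · have := Set.ncard_le_ncard hS (Set.finite_Iio m)
    rw [Set.ncard_Iio_nat] at this
    omega
  have hlow : (S ∩ Set.Iio (m - 3)).ncard ≤ (2 * (m - 3) + 2) / 3 :=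
    ih (m - 3) (by omega) Set.inter_subset_right fun x hx hx₁ hx₂ => h3 x hx.1 hx₁.1 hx₂.1
  have hhigh : (S ∩ Set.Ico (m - 3) m).ncard ≤ 2 := by
    have hgap : ∃ y ∈ Set.Ico (m - 3) m, y ∉ S ∩ Set.Ico (m - 3) m := by
      by_contra! h
      exact h3 (m - 3) (h _ ⟨le_rfl, by omega⟩).1 (h _ ⟨by omega, by omega⟩).1
        (h _ ⟨by omega, by omega⟩).1
    have := Set.ncard_lt_ncard ((Set.ssubset_iff_of_subset Set.inter_subset_right).mpr hgap)
    rw [Set.ncard_Ico_nat] at this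
    omega
  have hsplit : S = (S ∩ Set.Iio (m - 3)) ∪ (S ∩ Set.Ico (m - 3) m) := by
    ext x
    have := @hS x
    simp only [Set.mem_union, Set.mem_inter_iff, Set.mem_Iio, Set.mem_Ico] at this ⊢
    constructor
    · intro hx
      rcases lt_or_ge x (m - 3) with h | h
      exacts [Or.inl ⟨hx, h⟩, Or.inr ⟨hx, h, this hx⟩]
    · rintro (⟨hx, -⟩ | ⟨hx, -⟩) <;> exact hx
  have := Set.ncard_union_le (S ∩ Set.Iio (m - 3)) (S ∩ Set.Ico (m - 3) m)
  rw [← hsplit] at this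
  omega

theorem card_filter_mod_three_ne_two (m : ℕ) :
    ((Finset.range m).filter (fun x => x % 3 ≠ 2)).card = (2 * m + 2) / 3 := by
  induction m with
  | zero => rfl
  | succ k ih =>
    rw [Finset.range_add_one, Finset.filter_insert]
    by_cases h : k % 3 = 2
    · rw [if_neg (not_not_intro h), ih]
      omega
    · rw [if_pos h, Finset.card_insert_of_notMem (by simp), ih]
      obtain ⟨q, rfl | rfl⟩ : ∃ q, k = 3 * q ∨ k = 3 * q + 1 := ⟨k / 3, by omega⟩ <;> omega

section Fan

variable {m : ℕ}

@[simp] theorem fanGraph_adj_some_some (i j : Fin m) :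
    (fanGraph m).Adj (some i) (some j) ↔ i.val + 1 = j.val ∨ j.val + 1 = i.val := Iff.rfl

theorem fanGraph_adj_none_of_ne : ∀ v, v ≠ none → (fanGraph m).Adj none v
  | none, h => (h rfl).elim
  | some _, _ => trivial

theorem ncard_le_three_of_none_mem {S : Set (Option (Fin m))} (hS : IsGPSet (fanGraph m) S)
    (hnone : none ∈ S) : S.ncard ≤ 3 := by
  rw [isGPSet_iff_of_universal fanGraph_adj_none_of_ne] at hS
  have hpath : (some ⁻¹' S).ncard ≤ 2 := by
    by_contra! h
    obtain ⟨i, j, l, hi, hj, hl, hij, hil, hjl⟩ := (Set.two_lt_ncard_iff (Set.toFinite _)).mp h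
    have hij' := hS hi hnone hj (by simpa) trivial trivial
    have hil' := hS hi hnone hl (by simpa) trivial trivial
    have hjl' := hS hj hnone hl (by simpa) trivial trivial
    simp only [fanGraph_adj_some_some] at hij' hil' hjl'
    omega
  calc S.ncard ≤ (insert none (some '' (some ⁻¹' S))).ncard := by
        refine Set.ncard_le_ncard ?_ (Set.toFinite _)
        rintro (_ | i) hx
        exacts [Or.inl rfl, Or.inr ⟨i, hx, rfl⟩]
    _ ≤ (some '' (some ⁻¹' S)).ncard + 1 := Set.ncard_insert_le _ _
    _ ≤ (some ⁻¹' S).ncard + 1 := by grw [Set.ncard_image_le (Set.toFinite _)]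
    _ ≤ 3 := by omega

theorem ncard_le_of_none_notMem {S : Set (Option (Fin m))} (hS : IsGPSet (fanGraph m) S)
    (hnone : none ∉ S) : S.ncard ≤ (2 * m + 2) / 3 := by
  rw [isGPSet_iff_of_universal fanGraph_adj_none_of_ne] at hS
  have hrange : S ⊆ Set.range some := by
    rintro (_ | i) hx
    exacts [(hnone hx).elim, ⟨i, rfl⟩]
  rw [← Set.ncard_preimage_of_injective_subset_range (Option.some_injective _) hrange,
    ← Set.ncard_image_of_injective _ Fin.val_injective]
  refine ncard_le_of_forall_not_three_consecutive ?_ ?_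
  · rintro _ ⟨i, -, rfl⟩
    exact i.isLt
  · rintro _ ⟨i, hi, rfl⟩ ⟨j, hj, hij⟩ ⟨l, hl, hil⟩
    have := hS hi hj hl (by simp [Fin.ext_iff]; omega) (by simp; omega) (by simp; omega)
    simp only [fanGraph_adj_some_some] at this
    omega

theorem isGPSet_fanGraph_mod_three_ne_two :
    IsGPSet (fanGraph m) (some '' {i | i.val % 3 ≠ 2}) := by
  rw [isGPSet_iff_of_universal fanGraph_adj_none_of_ne]
  rintro _ _ _ ⟨i, hi, rfl⟩ ⟨j, hj, rfl⟩ ⟨l, hl, rfl⟩ hil hij hjl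
  simp only [Set.mem_ofPred_eq, ne_eq, Option.some.injEq, Fin.ext_iff,
    fanGraph_adj_some_some] at hi hj hl hil hij hjl ⊢
  omega

theorem ncard_fanGraph_mod_three_ne_two :
    (some '' {i : Fin m | i.val % 3 ≠ 2}).ncard = (2 * m + 2) / 3 := by
  rw [Set.ncard_image_of_injective _ (Option.some_injective _),
    ← Set.ncard_image_of_injective _ Fin.val_injective, ← card_filter_mod_three_ne_two m,
    ← Set.ncard_coe_finset]
  congr 1
  ext x
  simp only [Set.mem_image, Finset.coe_filter, Finset.mem_range]
  exact ⟨fun ⟨i, hi, hix⟩ => hix ▸ ⟨i.isLt, hi⟩, fun ⟨hx, hx3⟩ => ⟨⟨x, hx⟩, hx3, rfl⟩⟩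

end Fan

/-- For the fan graph `F_{n-1} = K₁ ⊕ P_{n-1}` (which has `n`
vertices), with `n ≥ 5`, the general position number equals `⌊2n/3⌋`. -/
theorem stmt_0 (n : ℕ) (hn : 5 ≤ n) :
    gpNumber (fanGraph (n - 1)) = 2 * n / 3 := by
  have hm : (2 * (n - 1) + 2) / 3 = 2 * n / 3 := by omega
  refine gpNumber_eq_of_forall_ncard_le (fun S hS => ?_)
    ⟨_, isGPSet_fanGraph_mod_three_ne_two, by rw [ncard_fanGraph_mod_three_ne_two, hm]⟩
  by_cases hnone : none ∈ S
  · have := ncard_le_three_of_none_mem hS hnone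
    omega
  · have := ncard_le_of_none_notMem hS hnone
    omega
end

section
/- Let G be a maximal outerplanar graph with maximum degree Δ(G) ≥ 2. Then gp(G) ≥ ⌊2(Δ(G)+1)/3⌋. -/
/-!
Let `z` be a vertex of maximum degree `Δ`, with neighbours `u₀, …, u_{Δ-1}` listed clockwise
from `z`. If `j > i + 1`, a chord `uᵢuⱼ` would cross the edge `z u_{i+1}`, so only consecutive
neighbours can be adjacent. Any two neighbours of `z` are at distance at most `2`, so three of them
fail to be in general position only when they form a path `x ~ y ~ w`, i.e. three consecutive
neighbours. Keeping the `uᵢ` with `i % 3 ≠ 2` therefore gives `⌊2(Δ+1)/3⌋` vertices in general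
position.
-/

open SimpleGraph

theorem SimpleGraph.dist_le_two_of_adj_of_adj {V : Type*} {G : SimpleGraph V} {z x y : V}
    (hx : G.Adj z x) (hy : G.Adj z y) : G.dist x y ≤ 2 := by
  simpa using dist_le (Walk.cons hx.symm (Walk.cons hy Walk.nil))

theorem isGPSet_of_subset_neighborSet {V : Type*} {G : SimpleGraph V} {z : V} {S : Set V}
    (hS : S ⊆ G.neighborSet z)
    (hpath : ∀ ⦃x y w⦄, x ∈ S → y ∈ S → w ∈ S → x ≠ y → y ≠ w → x ≠ w →
      G.Adj x y → G.Adj y w → False) :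
    IsGPSet G S := by
  intro x y w hx hy hw hxy hyw hxw hgeo
  have reach : ∀ ⦃a b⦄, a ∈ S → b ∈ S → G.Reachable a b := fun a b ha hb =>
    (hS ha).symm.reachable.trans (hS hb).reachable
  have hxw_le := dist_le_two_of_adj_of_adj (hS hx) (hS hw)
  have hxy_pos := (reach hx hy).pos_dist_of_ne hxy
  have hyw_pos := (reach hy hw).pos_dist_of_ne hyw
  exact hpath hx hy hw hxy hyw hxw (dist_eq_one_iff_adj.mp (by omega))
    (dist_eq_one_iff_adj.mp (by omega))

theorem IsGPSet.ncard_le_gpNumber {V : Type*} [Finite V] {G : SimpleGraph V} {S : Set V}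
    (hS : IsGPSet G S) : S.ncard ≤ gpNumber G :=
  le_csSup ⟨Nat.card V, by rintro _ ⟨T, -, rfl⟩; exact Set.ncard_le_card T⟩ ⟨S, hS, rfl⟩

theorem crossing_add_of_lt {n : ℕ} [NeZero n] (z : Fin n) {a b c : Fin n}
    (ha : 0 < a) (hab : a < b) (hbc : b < c) :
    Crossing (a + z) (c + z) (b + z) z := by
  have hac := hab.trans hbc
  have hc := c.isLt
  simp only [Crossing, StrictBtw, add_sub_add_right_eq_sub,
    show z - (c + z) = 0 - c by abel, Fin.sub_val_of_le hab.le, Fin.sub_val_of_le hac.le,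
    Fin.coe_sub_iff_lt.mpr hac, Fin.coe_sub_iff_lt.mpr (ha.trans hac), Fin.val_zero]
  simp only [Fin.lt_def, Fin.val_zero] at ha hab hbc
  omega

theorem exists_neighbor_enum_of_noncrossing {n : ℕ} [NeZero n] {G : SimpleGraph (Fin n)}
    (hnc : ∀ a b c d : Fin n, G.Adj a b → G.Adj c d → ¬ Crossing a b c d) (z : Fin n) :
    ∃ u : Fin (degSet G z) → Fin n, Function.Injective u ∧ (∀ i, G.Adj z (u i)) ∧
      ∀ i j, G.Adj (u i) (u j) → j.val ≤ i.val + 1 := by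
  classical
  set F := (G.neighborSet z).toFinset.image (· - z)
  have hF : F.card = degSet G z := by
    rw [Finset.card_image_of_injective _ sub_left_injective, degSet, Set.ncard_eq_toFinset_card']
  set e := F.orderEmbOfFin hF
  have he_adj : ∀ i, G.Adj z (e i + z) := by
    intro i
    obtain ⟨x, hx, hxe⟩ := Finset.mem_image.mp (F.orderEmbOfFin_mem hF i)
    rw [← hxe, sub_add_cancel]
    simpa using hx
  have he_pos : ∀ i, 0 < e i := fun i =>
    lt_of_le_of_ne (Fin.zero_le _) fun h => (he_adj i).ne (by rw [← h, zero_add])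
  refine ⟨fun i => e i + z, fun i j h => e.injective (add_right_cancel h), he_adj, ?_⟩
  intro i j hij
  by_contra! hfar
  let k : Fin (degSet G z) := ⟨i.val + 1, by omega⟩
  exact hnc _ _ _ _ hij (he_adj k).symm <| crossing_add_of_lt z (he_pos i)
    (e.strictMono (Fin.lt_def.mpr (Nat.lt_succ_self _))) (e.strictMono (Fin.lt_def.mpr hfar))

theorem exists_finset_fin_mod_three_ne_two (m : ℕ) :
    ∃ T : Finset (Fin m), T.card = 2 * (m + 1) / 3 ∧ ∀ i ∈ T, i.val % 3 ≠ 2 := by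
  let g : Fin (2 * (m + 1) / 3) → Fin m := fun j =>
    ⟨3 * (j.val / 2) + j.val % 2, by have := j.isLt; omega⟩
  have hg : Function.Injective g := fun a b h => by
    have h' : 3 * (a.val / 2) + a.val % 2 = 3 * (b.val / 2) + b.val % 2 := congrArg Fin.val h
    exact Fin.ext (by omega)
  refine ⟨Finset.univ.image g, by simp [Finset.card_image_of_injective _ hg], ?_⟩
  simp only [Finset.mem_image, Finset.mem_univ, true_and, forall_exists_index]
  rintro _ j rfl
  change (3 * (j.val / 2) + j.val % 2) % 3 ≠ 2
  omega

theorem stmt_1_general (n : ℕ) [NeZero n] (G : SimpleGraph (Fin n))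
    (hG : IsMOPFin n G) :
    2 * (maxDeg G + 1) / 3 ≤ gpNumber G := by
  obtain ⟨z, -, hz⟩ := Finset.univ.exists_mem_eq_sup Finset.univ_nonempty (degSet G)
  obtain ⟨u, hu_inj, hu_adj, hu_near⟩ := exists_neighbor_enum_of_noncrossing hG.2.2.1 z
  obtain ⟨T, hT_card, hT_mod⟩ := exists_finset_fin_mod_three_ne_two (degSet G z)
  have hS : IsGPSet G ↑(T.image u) := by
    refine isGPSet_of_subset_neighborSet (z := z)
      (by simpa [Set.subset_def] using fun i _ => hu_adj i) ?_
    simp only [Finset.coe_image, Set.mem_image, Finset.mem_coe]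
    rintro _ _ _ ⟨a, ha, rfl⟩ ⟨b, hb, rfl⟩ ⟨c, hc, rfl⟩ hab hbc hac hab' hbc'
    have := hT_mod a ha; have := hT_mod b hb; have := hT_mod c hc
    have := hu_near _ _ hab'; have := hu_near _ _ hab'.symm
    have := hu_near _ _ hbc'; have := hu_near _ _ hbc'.symm
    have := Fin.val_injective.ne (ne_of_apply_ne u hab)
    have := Fin.val_injective.ne (ne_of_apply_ne u hbc)
    have := Fin.val_injective.ne (ne_of_apply_ne u hac)
    -- `a, b, c` would be three consecutive integers, one of which is `≡ 2 [MOD 3]`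
    omega
  calc 2 * (maxDeg G + 1) / 3 = (↑(T.image u) : Set (Fin n)).ncard := by
        rw [Set.ncard_coe_finset, Finset.card_image_of_injective _ hu_inj, hT_card, maxDeg, hz]
    _ ≤ gpNumber G := hS.ncard_le_gpNumber

/-- A maximal outerplanar graph with `Δ(G) ≥ 2` satisfies
`gp(G) ≥ ⌊2(Δ(G)+1)/3⌋`. -/
theorem stmt_1 (n : ℕ) [NeZero n] (G : SimpleGraph (Fin n))
    (hG : IsMOPFin n G) (hΔ : 2 ≤ maxDeg G) :
    2 * (maxDeg G + 1) / 3 ≤ gpNumber G :=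
  stmt_1_general n G hG
end

section
/- Let G be a maximal outerplanar graph of order n ≥ 6 and let S be a general position set of G with |S| ≥ 4. Then the subgraph of G induced by S contains no triangle. -/
open SimpleGraph

/- Let `a, b, c ∈ S` form a triangle and let `d ∈ S` be a fourth vertex. The sides of the triangle
cut the Hamiltonian cycle into three arcs; `d` lies inside one of them, say the arc cut off by the
side `xy`, while the third corner `z` lies on the other side of `xy`. Since chords do not cross,
the chord `xy` separates the two sides, so every `d`–`z` geodesic passes through `x` or `y`,
contradicting general position. -/

section Geodesics

variable {V : Type*} {G : SimpleGraph V}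

lemma SimpleGraph.Walk.dist_add_dist_of_mem_support {u v w : V} {p : G.Walk u w}
    (hp : p.length = G.dist u w) (hv : v ∈ p.support) :
    G.dist u v + G.dist v w = G.dist u w := by
  classical
  have hsplit := congr_arg Walk.length (p.take_spec hv)
  rw [Walk.length_append] at hsplit
  have hle₁ := dist_le (p.takeUntil v hv)
  have hle₂ := dist_le (p.dropUntil v hv)
  have hge := (p.takeUntil v hv).reachable.dist_triangle_left w
  omega

lemma IsGPSet.notMem_support {S : Set V} (hS : IsGPSet G S) {u v w : V}
    (hu : u ∈ S) (hv : v ∈ S) (hw : w ∈ S) (huv : u ≠ v) (hvw : v ≠ w) (huw : u ≠ w)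
    {p : G.Walk u w} (hp : p.length = G.dist u w) : v ∉ p.support := fun hmem =>
  hS hu hv hw huv hvw huw (Walk.dist_add_dist_of_mem_support hp hmem).symm

end Geodesics

section CyclicOrder

variable {n : ℕ}

lemma strictBtw_iff {a x b : Fin n} :
    StrictBtw a x b ↔ a < x ∧ x < b ∨ x < b ∧ b < a ∨ b < a ∧ a < x := by
  unfold StrictBtw
  rcases le_or_gt a x with hax | hxa <;> rcases le_or_gt a b with hab | hba
  all_goals
    first
      | rw [Fin.sub_val_of_le hax] | rw [Fin.coe_sub_iff_lt.mpr hxa]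
    first
      | rw [Fin.sub_val_of_le hab] | rw [Fin.coe_sub_iff_lt.mpr hba]
    omega

lemma StrictBtw.ne_left {a x b : Fin n} (h : StrictBtw a x b) : x ≠ a := by
  rw [strictBtw_iff] at h; omega

lemma StrictBtw.ne_right {a x b : Fin n} (h : StrictBtw a x b) : x ≠ b := by
  rw [strictBtw_iff] at h; omega

lemma StrictBtw.not_swap {a x b : Fin n} (h : StrictBtw a x b) : ¬ StrictBtw b x a := by
  rw [strictBtw_iff] at h ⊢; omega

lemma strictBtw_or_strictBtw_swap {a x b : Fin n} (hab : a ≠ b) (hxa : x ≠ a) (hxb : x ≠ b) :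
    StrictBtw a x b ∨ StrictBtw b x a := by
  simp only [strictBtw_iff]; omega

/-- The sides of the triangle `abc` cut the cycle into the arcs `(b, a)`, `(a, c)`, `(c, b)`; each
disjunct puts `d` in one arc and the opposite corner across that arc's chord. -/
lemma StrictBtw.separated_by_side {a b c d : Fin n} (hc : StrictBtw a c b)
    (hda : d ≠ a) (hdb : d ≠ b) (hdc : d ≠ c) :
    StrictBtw b d a ∧ StrictBtw a c b ∨ StrictBtw a d c ∧ StrictBtw c b a ∨
      StrictBtw c d b ∧ StrictBtw b a c := by
  simp only [strictBtw_iff] at hc ⊢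
  rcases hc with hc | hc | hc <;> rcases lt_or_gt_of_ne hda with hda | hda <;>
    rcases lt_or_gt_of_ne hdb with hdb | hdb <;> rcases lt_or_gt_of_ne hdc with hdc | hdc <;>
    first | (left; omega) | (right; left; omega) | (right; right; omega)

lemma cycleGraph_le_of_adj_add_one [NeZero n] {G : SimpleGraph (Fin n)}
    (hcyc : ∀ i : Fin n, G.Adj i (i + 1)) : cycleGraph n ≤ G := by
  have hsucc : ∀ u v : Fin n, (v - u).val = 1 → G.Adj u v := by
    intro u v h
    have hv : v = u + 1 := by
      rw [← sub_add_cancel v u, add_comm]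
      congr 1
      ext
      rw [h, Fin.val_one', Nat.mod_eq_of_lt (by omega)]
    exact hv ▸ hcyc u
  intro u v huv
  rcases cycleGraph_adj'.mp huv with h | h
  · exact (hsucc v u h).symm
  · exact hsucc u v h

end CyclicOrder

section Outerplanar

variable {n : ℕ} {G : SimpleGraph (Fin n)}
  (hnc : ∀ a b c d : Fin n, G.Adj a b → G.Adj c d → ¬ Crossing a b c d)
include hnc

/-- An edge jumping between the two sides of the chord `xy` would cross it. -/
lemma SimpleGraph.Walk.mem_support_of_strictBtw {x y : Fin n} (hxy : G.Adj x y) {u w : Fin n}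
    (p : G.Walk u w) (hu : StrictBtw x u y) (hw : StrictBtw y w x) :
    x ∈ p.support ∨ y ∈ p.support := by
  induction p with
  | nil => exact absurd hw hu.not_swap
  | @cons u v w huv q ih =>
    by_cases hvx : v = x
    · exact .inl (by simp [← hvx])
    by_cases hvy : v = y
    · exact .inr (by simp [← hvy])
    rcases strictBtw_or_strictBtw_swap hxy.ne hvx hvy with hv | hv
    · rcases ih hv hw with h | h <;> simp [h]
    · exact absurd ⟨hu, hv⟩ (hnc x y u v hxy huv)

variable (hconn : G.Preconnected) {S : Set (Fin n)} (hS : IsGPSet G S)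
include hconn hS

lemma IsGPSet.not_separated_by_edge {x y d z : Fin n} (hx : x ∈ S) (hy : y ∈ S) (hd : d ∈ S)
    (hz : z ∈ S) (hxy : G.Adj x y) (hdxy : StrictBtw x d y) (hzyx : StrictBtw y z x) : False := by
  obtain ⟨p, hp⟩ := (hconn d z).exists_walk_length_eq_dist
  have hdz : d ≠ z := fun h => hzyx.not_swap (h ▸ hdxy)
  rcases Walk.mem_support_of_strictBtw hnc hxy p hdxy hzyx with h | h
  · exact hS.notMem_support hd hx hz hdxy.ne_left hzyx.ne_right.symm hdz hp h
  · exact hS.notMem_support hd hy hz hdxy.ne_right hzyx.ne_left.symm hdz hp h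

lemma IsGPSet.not_triangle_of_strictBtw {a b c d : Fin n} (ha : a ∈ S) (hb : b ∈ S) (hc : c ∈ S)
    (hd : d ∈ S) (hab : G.Adj a b) (hbc : G.Adj b c) (hac : G.Adj a c) (hcab : StrictBtw a c b)
    (hda : d ≠ a) (hdb : d ≠ b) (hdc : d ≠ c) : False := by
  rcases hcab.separated_by_side hda hdb hdc with ⟨h₁, h₂⟩ | ⟨h₁, h₂⟩ | ⟨h₁, h₂⟩
  · exact hS.not_separated_by_edge hnc hconn hb ha hd hc hab.symm h₁ h₂
  · exact hS.not_separated_by_edge hnc hconn ha hc hd hb hac h₁ h₂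
  · exact hS.not_separated_by_edge hnc hconn hc hb hd ha hbc.symm h₁ h₂

end Outerplanar

theorem stmt_4_general (n : ℕ) [NeZero n] (G : SimpleGraph (Fin n))
    (hG : IsMOPFin n G) (S : Set (Fin n)) (hS : IsGPSet G S) (hcard : 4 ≤ S.ncard) :
    ∀ a ∈ S, ∀ b ∈ S, ∀ c ∈ S, ¬ (G.Adj a b ∧ G.Adj b c ∧ G.Adj a c) := by
  obtain ⟨-, hcyc, hnc, -⟩ := hG
  have hconn := cycleGraph_preconnected.mono (cycleGraph_le_of_adj_add_one hcyc)
  rintro a ha b hb c hc ⟨hab, hbc, hac⟩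
  have habc : ({a, b, c} : Set (Fin n)).ncard < S.ncard := by
    have := Set.ncard_insert_le a {b, c}
    have := Set.ncard_insert_le b {c}
    have := Set.ncard_singleton c
    omega
  obtain ⟨d, hd, hdabc⟩ := Set.exists_mem_notMem_of_ncard_lt_ncard habc
  simp only [Set.mem_insert_iff, Set.mem_singleton_iff, not_or] at hdabc
  obtain ⟨hda, hdb, hdc⟩ := hdabc
  rcases strictBtw_or_strictBtw_swap hab.ne hac.ne.symm hbc.ne.symm with hcab | hcba
  · exact hS.not_triangle_of_strictBtw hnc hconn ha hb hc hd hab hbc hac hcab hda hdb hdc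
  · exact hS.not_triangle_of_strictBtw hnc hconn hb ha hc hd hab.symm hac hbc hcba hdb hda hdc

/-- In a maximal outerplanar graph of order `n ≥ 6`, the subgraph
induced by a general position set of size at least 4 contains no triangle. -/
theorem stmt_4 (n : ℕ) [NeZero n] (hn : 6 ≤ n) (G : SimpleGraph (Fin n))
    (hG : IsMOPFin n G) (S : Set (Fin n)) (hS : IsGPSet G S) (hcard : 4 ≤ S.ncard) :
    ∀ a ∈ S, ∀ b ∈ S, ∀ c ∈ S, ¬ (G.Adj a b ∧ G.Adj b c ∧ G.Adj a c) :=
  stmt_4_general n G hG S hS hcard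
end

section
/- Let G be a maximal outerplanar graph of order n ≥ 6. Then gp(G) ≤ ⌊2n/3⌋. -/
open SimpleGraph

/-!
If three consecutive vertices `i, i+1, i+2` of the Hamiltonian cycle lie in a general position
set `S`, then `i` and `i+2` must be adjacent (otherwise `i+1` lies on an `i`–`(i+2)` geodesic),
and planarity then forces `i+1` to have degree two. A geodesic from `i+1` to any fourth vertex
of `S` therefore passes through `i` or `i+2`, so general position sets with at least four
vertices contain no three consecutive vertices, and double counting the windows
`{i, i+1, i+2}` bounds such a set by `2n/3`.
-/

namespace SimpleGraph

variable {V : Type*} {G : SimpleGraph V}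

lemma Reachable.exists_adj_dist_eq_add_one {u w : V} (h : G.Reachable u w) (hne : u ≠ w) :
    ∃ y, G.Adj u y ∧ G.dist u w = G.dist y w + 1 := by
  obtain ⟨p, hp⟩ := h.exists_walk_length_eq_dist
  cases p with
  | nil => exact absurd rfl hne
  | @cons _ y _ hadj q =>
    refine ⟨y, hadj, ?_⟩
    have hle : G.dist y w ≤ q.length := dist_le q
    have htri : G.dist u w ≤ G.dist u y + G.dist y w := q.reachable.dist_triangle_right u
    rw [dist_eq_one_iff_adj.mpr hadj] at htri
    simp only [Walk.length_cons] at hp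
    omega

end SimpleGraph

open SimpleGraph

section GeneralPosition

variable {V : Type*} {G : SimpleGraph V} {S : Set V}

lemma IsGPSet.adj_of_adj_of_adj (hS : IsGPSet G S) {u v w : V} (hu : u ∈ S) (hv : v ∈ S)
    (hw : w ∈ S) (huw : u ≠ w) (huv : G.Adj u v) (hvw : G.Adj v w) : G.Adj u w := by
  have hpos : 0 < G.dist u w := (huv.reachable.trans hvw.reachable).pos_dist_of_ne huw
  have hle : G.dist u w ≤ 2 := by
    simpa using dist_le ((Walk.nil.cons hvw).cons huv)
  have hne : G.dist u w ≠ 2 := by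
    simpa [dist_eq_one_iff_adj.mpr huv, dist_eq_one_iff_adj.mpr hvw] using
      hS hu hv hw huv.ne hvw.ne huw
  rw [← dist_eq_one_iff_adj]
  omega

lemma IsGPSet.adj_of_neighborSet_subset (hS : IsGPSet G S) (hconn : G.Connected) {u w : V}
    (hu : u ∈ S) (hw : w ∈ S) (huw : u ≠ w) (hN : G.neighborSet u ⊆ S) : G.Adj u w := by
  obtain ⟨y, huy, hdist⟩ := (hconn u w).exists_adj_dist_eq_add_one huw
  by_contra hnadj
  have hyw : y ≠ w := by rintro rfl; exact hnadj huy
  refine hS hu (hN huy) hw huy.ne hyw huw ?_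
  rw [hdist, dist_eq_one_iff_adj.mpr huy, add_comm]

end GeneralPosition

open Fin.CommRing

section Cycle

variable {n : ℕ} [NeZero n]

lemma Fin.val_one_of_one_lt (hn : 1 < n) : (1 : Fin n).val = 1 := by
  simpa using Nat.mod_eq_of_lt hn

lemma Fin.val_two_of_two_lt (hn : 2 < n) : (2 : Fin n).val = 2 := by
  simpa using Nat.mod_eq_of_lt hn

lemma connected_of_adj_add_one {G : SimpleGraph (Fin n)} (hcyc : ∀ i, G.Adj i (i + 1)) :
    G.Connected := by
  have hreach : ∀ k : ℕ, G.Reachable 0 k := by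
    intro k
    induction k with
    | zero => simp
    | succ k ih => simpa using ih.trans (hcyc k).reachable
  refine (connected_iff _).mpr ⟨fun u v => ?_, ⟨0⟩⟩
  simpa using (hreach u).symm.trans (hreach v)

lemma strictBtw_add_one_add_two (hn : 2 < n) (i : Fin n) : StrictBtw i (i + 1) (i + 2) := by
  simp only [StrictBtw, add_sub_cancel_left, Fin.val_one_of_one_lt (by omega : 1 < n),
    Fin.val_two_of_two_lt hn]
  omega

lemma strictBtw_add_two_of_ne (hn : 2 < n) {i x : Fin n} (hx₀ : x ≠ i) (hx₁ : x ≠ i + 1)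
    (hx₂ : x ≠ i + 2) : StrictBtw (i + 2) x i := by
  obtain ⟨k, rfl⟩ : ∃ k, x = i + 2 + k := ⟨x - (i + 2), by ring⟩
  have hneg₁ : (-1 : Fin n).val = n - 1 := by
    rw [Fin.val_neg', Fin.val_one_of_one_lt (by omega), Nat.mod_eq_of_lt (by omega)]
  have hneg₂ : (-2 : Fin n).val = n - 2 := by
    rw [Fin.val_neg', Fin.val_two_of_two_lt hn, Nat.mod_eq_of_lt (by omega)]
  have hk₀ : k.val ≠ 0 := fun h => hx₂ (by rw [Fin.val_eq_zero_iff.mp h, add_zero])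
  have hk₁ : k.val ≠ n - 1 := fun h => hx₁ (by rw [Fin.ext (h.trans hneg₁.symm)]; ring)
  have hk₂ : k.val ≠ n - 2 := fun h => hx₀ (by rw [Fin.ext (h.trans hneg₂.symm)]; ring)
  simp only [StrictBtw, add_sub_cancel_left, show i - (i + 2) = -2 by ring, hneg₂]
  omega

lemma neighborSet_add_one_subset {G : SimpleGraph (Fin n)} (hn : 2 < n)
    (hnc : ∀ a b c d : Fin n, G.Adj a b → G.Adj c d → ¬ Crossing a b c d) {i : Fin n}
    (hchord : G.Adj i (i + 2)) : G.neighborSet (i + 1) ⊆ {i, i + 2} := by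
  intro x hx
  by_contra hxi
  simp only [Set.mem_insert_iff, Set.mem_singleton_iff, not_or] at hxi
  exact hnc _ _ _ _ hchord hx
    ⟨strictBtw_add_one_add_two hn i, strictBtw_add_two_of_ne hn hxi.1 hx.ne' hxi.2⟩

lemma IsGPSet.not_three_consecutive {G : SimpleGraph (Fin n)} (hn : 2 < n)
    (hcyc : ∀ i : Fin n, G.Adj i (i + 1))
    (hnc : ∀ a b c d : Fin n, G.Adj a b → G.Adj c d → ¬ Crossing a b c d)
    {S : Set (Fin n)} (hS : IsGPSet G S) (hS₄ : 3 < S.ncard) (i : Fin n) :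
    ¬ (i ∈ S ∧ i + 1 ∈ S ∧ i + 2 ∈ S) := by
  rintro ⟨h₀, h₁, h₂⟩
  have hne : i ≠ i + 2 := left_ne_add.mpr fun h => by simpa [h] using Fin.val_two_of_two_lt hn
  have hadj : G.Adj (i + 1) (i + 2) := by simpa [add_assoc, one_add_one_eq_two] using hcyc (i + 1)
  have hchord := hS.adj_of_adj_of_adj h₀ h₁ h₂ hne (hcyc i) hadj
  have hN := neighborSet_add_one_subset hn hnc hchord
  have hcard : ({i, i + 1, i + 2} : Set (Fin n)).ncard < S.ncard :=
    ((Set.ncard_insert_le _ _).trans (Nat.succ_le_succ ((Set.ncard_insert_le _ _).trans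
      (by simp)))).trans_lt hS₄
  obtain ⟨d, hd, hdi⟩ := Set.exists_mem_notMem_of_ncard_lt_ncard hcard
  simp only [Set.mem_insert_iff, Set.mem_singleton_iff, not_or] at hdi
  have hd' := hN <| hS.adj_of_neighborSet_subset (connected_of_adj_add_one hcyc) h₁ hd
    (Ne.symm hdi.2.1) (hN.trans (by simp [Set.insert_subset_iff, h₀, h₂]))
  simp only [Set.mem_insert_iff, Set.mem_singleton_iff] at hd'
  tauto

end Cycle

lemma Finset.card_le_of_not_three_consecutive {n : ℕ} [NeZero n] {T : Finset (Fin n)}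
    (hT : ∀ i, ¬ (i ∈ T ∧ i + 1 ∈ T ∧ i + 2 ∈ T)) : 3 * T.card ≤ 2 * n := by
  classical
  let f : Fin n → ℕ := fun i => if i ∈ T then 1 else 0
  have hshift (a : Fin n) : ∑ i, f (i + a) = T.card :=
    (Equiv.sum_comp (Equiv.addRight a) f).trans (by simp [f])
  have hwindow (i : Fin n) : f (i + 0) + f (i + 1) + f (i + 2) ≤ 2 := by
    have := hT i
    simp only [f, add_zero]
    split_ifs <;> simp_all
  calc 3 * T.card = ∑ i, (f (i + 0) + f (i + 1) + f (i + 2)) := by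
        simp only [Finset.sum_add_distrib, hshift]; ring
    _ ≤ ∑ _i : Fin n, 2 := Finset.sum_le_sum fun i _ => hwindow i
    _ = 2 * n := by simp [mul_comm]

/-- A maximal outerplanar graph of order `n ≥ 6` satisfies
`gp(G) ≤ ⌊2n/3⌋`. -/
theorem stmt_5 (n : ℕ) [NeZero n] (hn : 6 ≤ n) (G : SimpleGraph (Fin n))
    (hG : IsMOPFin n G) :
    gpNumber G ≤ 2 * n / 3 := by
  classical
  obtain ⟨-, hcyc, hnc, -⟩ := hG
  refine csSup_le' ?_
  rintro _ ⟨S, hS, rfl⟩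
  by_cases hsmall : S.ncard ≤ 3
  · omega
  have hT := S.toFinset.card_le_of_not_three_consecutive fun i => by
    simpa using hS.not_three_consecutive (by omega) hcyc hnc (by omega) i
  rw [Set.ncard_eq_toFinset_card']
  omega
end

section
/- Let G be a maximal outerplanar graph of order n ≥ 4 with k internal triangles. Then G has exactly k + 2 vertices of degree 2. -/
open SimpleGraph

/-! An ear of a maximal outerplane graph `G` (a vertex of degree 2) is exactly a vertex `v`
whose cycle neighbours `v - 1`, `v + 1` are adjacent, and an ear exists when `n ≥ 4`: a chord of
minimal span cuts off a single vertex. Rotate an ear to the last position `n - 1` and delete it.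
The result `G'` is maximal outerplane on `n - 1` vertices, and its new boundary edge `{n - 2, 0}`
lies in a unique triangle `{n - 2, 0, y}`. The ears of `G` are `n - 1` and the ears of `G'` other
than `0` and `n - 2`; and `0` (resp. `n - 2`) is an ear of `G'` exactly when `y = 1`
(resp. `y = n - 3`), i.e. exactly when the triangle `{n - 2, 0, y}` has a cycle edge of `G`.
As two cycle-consecutive vertices cannot both be ears once `n - 1 ≥ 4`, deleting the ear changes
the number of ears and the number of internal triangles by the same amount; the base case `n = 4`
has two ears and no internal triangle. -/

open Fin.CommRing

namespace Fin

section

variable {n : ℕ} [NeZero n]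

theorem val_neg_of_ne_zero {x : Fin n} (hx : x ≠ 0) : ((-x : Fin n) : ℕ) = n - x := by
  rw [Fin.val_neg', Nat.mod_eq_of_lt]
  have : (x : ℕ) ≠ 0 := fun h => hx (Fin.ext h)
  omega

theorem val_one_of_two_le (hn : 2 ≤ n) : ((1 : Fin n) : ℕ) = 1 :=
  Nat.mod_eq_of_lt hn

theorem val_two_of_three_le (hn : 3 ≤ n) : ((2 : Fin n) : ℕ) = 2 :=
  Nat.mod_eq_of_lt hn

theorem val_neg_one (hn : 2 ≤ n) : ((-1 : Fin n) : ℕ) = n - 1 := by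
  rw [val_neg_of_ne_zero, val_one_of_two_le hn]
  rw [Ne, Fin.ext_iff, val_one_of_two_le hn, Fin.val_zero]
  omega

theorem sub_one_ne_add_one (hn : 3 ≤ n) (v : Fin n) : v - 1 ≠ v + 1 := by
  intro h
  have h2 : v + 1 - (v - 1) = 2 := by ring
  rw [← h, sub_self, Fin.ext_iff, val_two_of_three_le hn, Fin.val_zero] at h2
  omega

end

variable {m : ℕ}

theorem castSucc_eq_castSucc_add_one_iff {a b : Fin (m + 1)} :
    b.castSucc = a.castSucc + 1 ↔ (b : ℕ) = a + 1 := by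
  rw [Fin.coeSucc_eq_succ, Fin.ext_iff, Fin.val_castSucc, Fin.val_succ]

theorem eq_add_one_iff_val {a b : Fin (m + 1)} :
    b = a + 1 ↔ (b : ℕ) = a + 1 ∨ (a : ℕ) = m ∧ (b : ℕ) = 0 := by
  have := b.isLt
  rw [Fin.ext_iff, Fin.val_add_one]
  split_ifs with h
  · rw [h, Fin.val_last]
    omega
  · have := Fin.val_lt_last h
    omega

theorem castSucc_last_add_one : (Fin.last m).castSucc + 1 = Fin.last (m + 1) := by
  rw [Fin.coeSucc_eq_succ, Fin.succ_last]

theorem last_sub_one : Fin.last (m + 1) - 1 = (Fin.last m).castSucc :=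
  (eq_sub_of_add_eq castSucc_last_add_one).symm

theorem castSucc_add_one {v : Fin (m + 1)} (hv : v ≠ Fin.last m) :
    v.castSucc + 1 = (v + 1).castSucc := by
  rw [Fin.coeSucc_eq_succ, Fin.ext_iff, Fin.val_succ, Fin.val_castSucc,
    Fin.val_add_one_of_lt (Fin.lt_last_iff_ne_last.2 hv)]

theorem castSucc_sub_one {v : Fin (m + 1)} (hv : v ≠ 0) : v.castSucc - 1 = (v - 1).castSucc := by
  rw [Fin.ext_iff, Fin.val_castSucc, Fin.val_sub_one_of_ne_zero hv,
    Fin.val_sub_one_of_ne_zero (by simpa using hv), Fin.val_castSucc]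

theorem zero_sub_one : (0 : Fin (m + 1)) - 1 = Fin.last m :=
  sub_eq_of_eq_add (Fin.last_add_one m).symm

end Fin

section CyclicOrder

variable {n : ℕ}

theorem strictBtw_iff_val (a x b : Fin n) :
    StrictBtw a x b ↔ (a : ℕ) < x ∧ (x : ℕ) < b ∨ (b : ℕ) < a ∧ (a : ℕ) < x ∨
      (x : ℕ) < b ∧ (x : ℕ) < a ∧ (b : ℕ) < a := by
  unfold StrictBtw
  rcases le_or_gt a x with hax | hax <;> rcases le_or_gt a b with hab | hab <;>
    simp only [Fin.coe_sub_iff_le.2, Fin.coe_sub_iff_lt.2, hax, hab] <;>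
    have := x.isLt <;> have := b.isLt <;> omega

theorem crossing_iff_val (a b c d : Fin n) :
    Crossing a b c d ↔
      ((a : ℕ) < c ∧ (c : ℕ) < b ∨ (b : ℕ) < a ∧ (a : ℕ) < c ∨
        (c : ℕ) < b ∧ (c : ℕ) < a ∧ (b : ℕ) < a) ∧
      ((b : ℕ) < d ∧ (d : ℕ) < a ∨ (a : ℕ) < b ∧ (b : ℕ) < d ∨
        (d : ℕ) < a ∧ (d : ℕ) < b ∧ (a : ℕ) < b) := by
  rw [Crossing, strictBtw_iff_val, strictBtw_iff_val]

theorem crossing_castSucc_iff (a b c d : Fin n) :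
    Crossing a.castSucc b.castSucc c.castSucc d.castSucc ↔ Crossing a b c d := by
  simp only [crossing_iff_val, Fin.val_castSucc]

variable [NeZero n]

theorem strictBtw_sub_right (a x b c : Fin n) :
    StrictBtw (a - c) (x - c) (b - c) ↔ StrictBtw a x b := by
  simp only [StrictBtw, sub_sub_sub_cancel_right]

theorem crossing_sub_right (a b x y c : Fin n) :
    Crossing (a - c) (b - c) (x - c) (y - c) ↔ Crossing a b x y := by
  simp only [Crossing, strictBtw_sub_right]

theorem crossing_add_right (a b x y c : Fin n) :
    Crossing (a + c) (b + c) (x + c) (y + c) ↔ Crossing a b x y := by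
  rw [← crossing_sub_right _ _ _ _ c]
  simp only [add_sub_cancel_right]

theorem strictBtw_sub_one_add_one_iff (hn : 3 ≤ n) (v x : Fin n) :
    StrictBtw (v - 1) x (v + 1) ↔ x = v := by
  obtain ⟨d, rfl⟩ : ∃ d, x = v + d := ⟨x - v, by ring⟩
  rw [← strictBtw_sub_right _ _ _ v, show v - 1 - v = -1 by ring, show v + 1 - v = 1 by ring,
    add_sub_cancel_left, add_eq_left, strictBtw_iff_val, Fin.val_neg_one (by omega),
    Fin.val_one_of_two_le (by omega), Fin.ext_iff, Fin.val_zero]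
  omega

theorem strictBtw_add_one_sub_one_iff (hn : 3 ≤ n) (v x : Fin n) :
    StrictBtw (v + 1) x (v - 1) ↔ x ≠ v - 1 ∧ x ≠ v ∧ x ≠ v + 1 := by
  obtain ⟨d, rfl⟩ : ∃ d, x = v + d := ⟨x - v, by ring⟩
  rw [← strictBtw_sub_right _ _ _ v, show v - 1 - v = -1 by ring, show v + 1 - v = 1 by ring,
    add_sub_cancel_left, sub_eq_add_neg, ne_eq, ne_eq, ne_eq, add_right_inj, add_eq_left,
    add_right_inj, strictBtw_iff_val, Fin.ext_iff, Fin.ext_iff, Fin.ext_iff,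
    Fin.val_neg_one (by omega), Fin.val_one_of_two_le (by omega), Fin.val_zero]
  have := d.isLt
  omega

end CyclicOrder

theorem Set.ncard_preimage_equiv {α β : Type*} (e : α ≃ β) (s : Set β) :
    (e ⁻¹' s).ncard = s.ncard :=
  Set.ncard_preimage_of_injective_subset_range e.injective (by simp)

theorem degSet_comap_equiv {V W : Type*} (G : SimpleGraph W) (e : V ≃ W) (v : V) :
    degSet (G.comap e) v = degSet G (e v) := by
  have : (G.comap e).neighborSet v = e ⁻¹' G.neighborSet (e v) := by ext; simp
  rw [degSet, this, Set.ncard_preimage_equiv, degSet]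

theorem ncard_setOf_degSet_comap_equiv {V W : Type*} (G : SimpleGraph W) (e : V ≃ W) (d : ℕ) :
    {v | degSet (G.comap e) v = d}.ncard = {w | degSet G w = d}.ncard := by
  simp only [degSet_comap_equiv]
  exact Set.ncard_preimage_equiv e {w | degSet G w = d}

theorem SimpleGraph.IsNClique.eq_of_unique_common_neighbor {V : Type*} [DecidableEq V]
    {H : SimpleGraph V} {T : Finset V} {a b y : V} (hT : H.IsNClique 3 T) (ha : a ∈ T)
    (hb : b ∈ T) (hy : ∀ z, H.Adj a z → H.Adj b z → z = y) : T = {a, b, y} := by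
  refine Finset.eq_of_subset_of_card_le (fun z hz => ?_)
    (Finset.card_le_three.trans hT.card_eq.ge)
  by_cases hza : z = a
  · simp [hza]
  by_cases hzb : z = b
  · simp [hzb]
  simp [hy z (hT.isClique ha hz (Ne.symm hza)) (hT.isClique hb hz (Ne.symm hzb))]

section Rotation

variable {n : ℕ} [NeZero n]

theorem isMOPFin_comap_addRight {G : SimpleGraph (Fin n)} (hG : IsMOPFin n G) (c : Fin n) :
    IsMOPFin n (G.comap (Equiv.addRight c)) := by
  obtain ⟨h3, hham, hnc, hmax⟩ := hG
  refine ⟨h3, fun i => ?_, fun a b x y hab hxy hcr => ?_, fun a b hne hnadj => ?_⟩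
  · simpa [add_right_comm i 1 c] using hham (i + c)
  · exact hnc _ _ _ _ hab hxy ((crossing_add_right a b x y c).2 hcr)
  · obtain ⟨u, v, huv, hcr⟩ := hmax (a + c) (b + c) (by simpa using hne) (by simpa using hnadj)
    refine ⟨u - c, v - c, by simpa using huv, ?_⟩
    simpa using (crossing_sub_right _ _ _ _ c).2 hcr

theorem internalTriangles_comap_addRight (G : SimpleGraph (Fin n)) (c : Fin n) :
    InternalTriangles n (G.comap (Equiv.addRight c)) =
      (Equiv.addRight c).finsetCongr ⁻¹' InternalTriangles n G := by
  ext T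
  simp only [InternalTriangles, Set.mem_preimage, Set.mem_ofPred_eq, Equiv.finsetCongr_apply,
    Finset.card_map, Finset.forall_mem_map, Equiv.coe_toEmbedding, Equiv.coe_addRight, comap_adj,
    add_right_comm _ c (1 : Fin n), ne_eq, add_left_inj]

theorem ncard_internalTriangles_comap_addRight (G : SimpleGraph (Fin n)) (c : Fin n) :
    (InternalTriangles n (G.comap (Equiv.addRight c))).ncard =
      (InternalTriangles n G).ncard := by
  rw [internalTriangles_comap_addRight, Set.ncard_preimage_equiv]

end Rotation

section Ears

variable {n : ℕ} [NeZero n] {G : SimpleGraph (Fin n)}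

theorem adj_iff_of_adj_sub_one_add_one (hG : IsMOPFin n G) {v : Fin n}
    (h : G.Adj (v - 1) (v + 1)) (u : Fin n) : G.Adj v u ↔ u = v - 1 ∨ u = v + 1 := by
  constructor
  · intro hvu
    by_contra! hu
    exact hG.2.2.1 _ _ _ _ h hvu ⟨(strictBtw_sub_one_add_one_iff hG.1 v v).2 rfl,
      (strictBtw_add_one_sub_one_iff hG.1 v u).2 ⟨hu.1, (G.ne_of_adj hvu).symm, hu.2⟩⟩
  · rintro (rfl | rfl)
    · simpa using (hG.2.1 (v - 1)).symm
    · exact hG.2.1 v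

theorem degSet_eq_two_iff (hG : IsMOPFin n G) (v : Fin n) :
    degSet G v = 2 ↔ G.Adj (v - 1) (v + 1) := by
  have hne := Fin.sub_one_ne_add_one hG.1 v
  have hsub : ({v - 1, v + 1} : Set (Fin n)) ⊆ G.neighborSet v := by
    rintro u (rfl | rfl)
    · simpa using (hG.2.1 (v - 1)).symm
    · exact hG.2.1 v
  constructor
  · intro hdeg
    by_contra hnadj
    have hN : G.neighborSet v = {v - 1, v + 1} :=
      (Set.eq_of_subset_of_ncard_le hsub (by rw [Set.ncard_pair hne]; exact hdeg.le)).symm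
    obtain ⟨c, d, hcd, hc, hd⟩ := hG.2.2.2 _ _ hne hnadj
    rw [strictBtw_sub_one_add_one_iff hG.1] at hc
    rw [strictBtw_add_one_sub_one_iff hG.1] at hd
    have hdN : d ∈ G.neighborSet v := hc ▸ hcd
    rw [hN] at hdN
    rcases hdN with rfl | rfl
    · exact hd.1 rfl
    · exact hd.2.2 rfl
  · intro h
    have hN : G.neighborSet v = {v - 1, v + 1} := by
      ext u
      exact adj_iff_of_adj_sub_one_add_one hG h u
    rw [degSet, hN, Set.ncard_pair hne]

theorem not_degSet_add_one_eq_two (hG : IsMOPFin n G) (hn : 4 ≤ n) {v : Fin n}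
    (hv : degSet G v = 2) : degSet G (v + 1) ≠ 2 := by
  intro hv'
  rw [degSet_eq_two_iff hG] at hv hv'
  rw [add_sub_cancel_right] at hv'
  refine hG.2.2.1 _ _ _ _ hv hv' ?_
  rw [← crossing_sub_right _ _ _ _ v, show v - 1 - v = -1 by ring, show v + 1 - v = 1 by ring,
    sub_self, show v + 1 + 1 - v = 2 by ring, crossing_iff_val, Fin.val_neg_one (by omega),
    Fin.val_one_of_two_le (by omega), Fin.val_two_of_three_le (by omega), Fin.val_zero]
  omega

theorem exists_shorter_adj_of_three_le (hG : IsMOPFin n G) {a b : Fin n} (hab : G.Adj a b)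
    (h3 : 3 ≤ ((b - a : Fin n) : ℕ)) :
    ∃ c d, G.Adj c d ∧ 2 ≤ ((d - c : Fin n) : ℕ) ∧
      ((d - c : Fin n) : ℕ) < (b - a : Fin n) := by
  obtain ⟨B, rfl⟩ : ∃ B, b = a + B := ⟨b - a, by ring⟩
  have hn := hG.1
  have h1 := Fin.val_one_of_two_le (n := n) (by omega)
  rw [add_sub_cancel_left] at h3 ⊢
  by_cases hadj : G.Adj (a + 1) (a + B)
  · have hB1 : ((B - 1 : Fin n) : ℕ) = B - 1 :=
      Fin.val_sub_one_of_ne_zero (fun h => by simp [h] at h3)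
    refine ⟨a + 1, a + B, hadj, ?_⟩
    rw [add_sub_add_left_eq_sub, hB1]
    omega
  have hne : a + 1 ≠ a + B := fun h => by
    rw [add_right_inj] at h
    omega
  obtain ⟨c, d, hcd, hcr⟩ := hG.2.2.2 _ _ hne hadj
  obtain ⟨c, rfl⟩ : ∃ c', c = a + c' := ⟨c - a, by ring⟩
  obtain ⟨d, rfl⟩ : ∃ d', d = a + d' := ⟨d - a, by ring⟩
  rw [← crossing_sub_right _ _ _ _ a] at hcr
  simp only [add_sub_cancel_left] at hcr
  rw [crossing_iff_val, h1] at hcr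
  rcases Nat.eq_zero_or_pos (d : ℕ) with hd | hd
  · refine ⟨a, a + c, ?_, ?_⟩
    · rw [show d = 0 from Fin.ext hd, add_zero] at hcd
      exact hcd.symm
    · rw [add_sub_cancel_left]
      omega
  · refine absurd hcd (hG.2.2.1 _ _ _ _ hab · ?_)
    rw [← crossing_sub_right _ _ _ _ a]
    simp only [add_sub_cancel_left, sub_self]
    rw [crossing_iff_val, Fin.val_zero]
    have := d.isLt
    omega

theorem exists_adj_add_two (hG : IsMOPFin n G) (hn : 4 ≤ n) : ∃ a, G.Adj a (a + 2) := by
  suffices h : ∀ s a b, G.Adj a b → ((b - a : Fin n) : ℕ) = s → 2 ≤ s → ∃ a, G.Adj a (a + 2) by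
    refine h (n - 1) 1 0 (by simpa using (hG.2.1 0).symm) ?_ (by omega)
    rw [zero_sub, Fin.val_neg_one (by omega)]
  intro s
  induction s using Nat.strong_induction_on with
  | _ s ih =>
    intro a b hab hs h2
    rcases h2.eq_or_lt with rfl | h3
    · refine ⟨a, ?_⟩
      rwa [← sub_add_cancel b a, add_comm, show b - a = 2 from
        Fin.ext (by rw [hs, Fin.val_two_of_three_le hG.1])] at hab
    · obtain ⟨c, d, hcd, hc, hlt⟩ := exists_shorter_adj_of_three_le hG hab (by omega)
      exact ih _ (hs ▸ hlt) c d hcd rfl hc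

theorem exists_degSet_eq_two (hG : IsMOPFin n G) (hn : 4 ≤ n) : ∃ v, degSet G v = 2 := by
  obtain ⟨a, ha⟩ := exists_adj_add_two hG hn
  refine ⟨a + 1, (degSet_eq_two_iff hG _).2 ?_⟩
  rwa [add_sub_cancel_right, add_assoc, one_add_one_eq_two]

end Ears

section Apex

variable {k : ℕ} {H : SimpleGraph (Fin (k + 1))}

theorem eq_of_adj_last_of_adj_zero (hH : IsMOPFin (k + 1) H) {y₁ y₂ : Fin (k + 1)}
    (h₁ : H.Adj (Fin.last k) y₁) (h₁' : H.Adj 0 y₁) (h₂ : H.Adj (Fin.last k) y₂)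
    (h₂' : H.Adj 0 y₂) : y₁ = y₂ := by
  wlog hle : (y₁ : ℕ) ≤ y₂ generalizing y₁ y₂
  · exact (this h₂ h₂' h₁ h₁' (by omega)).symm
  refine Fin.ext (hle.eq_or_lt.resolve_right fun hlt => hH.2.2.1 0 y₂ y₁ _ h₂' h₁.symm ?_)
  have h0 : (y₁ : ℕ) ≠ 0 := fun h => H.ne_of_adj h₁' (Fin.ext h.symm)
  have hl : (y₂ : ℕ) ≠ k := fun h => H.ne_of_adj h₂ (Fin.ext h.symm)
  rw [crossing_iff_val, Fin.val_zero, Fin.val_last]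
  omega

theorem exists_adj_last_adj_zero (hH : IsMOPFin (k + 1) H) :
    ∃ y, H.Adj (Fin.last k) y ∧ H.Adj 0 y := by
  obtain ⟨hk, hham, hnc, hmax⟩ := hH
  classical
  let S := Finset.univ.filter fun v : Fin (k + 1) => H.Adj 0 v ∧ v ≠ Fin.last k
  have h1S : (1 : Fin (k + 1)) ∈ S := by
    simp only [S, Finset.mem_filter, Finset.mem_univ, true_and]
    refine ⟨by simpa using hham 0, fun h => ?_⟩
    have := congrArg Fin.val h
    rw [Fin.val_one_of_two_le (by omega), Fin.val_last] at this
    omega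
  -- the neighbour of `0` furthest along the path `0, 1, …, k - 1` is adjacent to `k`
  obtain ⟨y, hyS, hymax⟩ := S.exists_max_image (fun v => (v : ℕ)) ⟨1, h1S⟩
  simp only [S, Finset.mem_filter, Finset.mem_univ, true_and] at hyS hymax
  obtain ⟨h0y, hyl⟩ := hyS
  have hyk : (y : ℕ) < k := Fin.val_lt_last hyl
  have hy0 : (y : ℕ) ≠ 0 := fun h => H.ne_of_adj h0y (Fin.ext h.symm)
  refine ⟨y, by_contra fun hly => ?_, h0y⟩
  obtain ⟨c, d, hcd, hcr⟩ := hmax y (Fin.last k) hyl (fun h => hly h.symm)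
  rw [crossing_iff_val, Fin.val_last] at hcr
  have := c.isLt
  have := d.isLt
  rcases Nat.eq_zero_or_pos (d : ℕ) with hd | hd
  · rw [show d = 0 from Fin.ext hd] at hcd
    have := hymax c ⟨hcd.symm, fun h => by rw [h, Fin.val_last] at hcr; omega⟩
    omega
  · refine hnc 0 y d c h0y hcd.symm ?_
    rw [crossing_iff_val, Fin.val_zero]
    omega

theorem degSet_zero_eq_two_iff (hH : IsMOPFin (k + 1) H) {y : Fin (k + 1)}
    (hyl : H.Adj (Fin.last k) y) (hy0 : H.Adj 0 y) : degSet H 0 = 2 ↔ y = 1 := by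
  rw [degSet_eq_two_iff hH, Fin.zero_sub_one, zero_add]
  refine ⟨fun h => eq_of_adj_last_of_adj_zero hH hyl hy0 h (by simpa using hH.2.1 0), ?_⟩
  rintro rfl
  exact hyl

theorem degSet_last_eq_two_iff (hH : IsMOPFin (k + 1) H) {y : Fin (k + 1)}
    (hyl : H.Adj (Fin.last k) y) (hy0 : H.Adj 0 y) :
    degSet H (Fin.last k) = 2 ↔ y = Fin.last k - 1 := by
  rw [degSet_eq_two_iff hH, Fin.last_add_one]
  refine ⟨fun h => eq_of_adj_last_of_adj_zero hH hyl hy0 ?_ h.symm, ?_⟩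
  · simpa using (hH.2.1 (Fin.last k - 1)).symm
  · rintro rfl
    exact hy0.symm

end Apex

section EarDeletion

variable {m : ℕ} {G : SimpleGraph (Fin (m + 2))}

theorem adj_last_iff (hG : IsMOPFin (m + 2) G) (hear : G.Adj (Fin.last m).castSucc 0)
    (u : Fin (m + 2)) : G.Adj (Fin.last (m + 1)) u ↔ u = (Fin.last m).castSucc ∨ u = 0 := by
  have h := adj_iff_of_adj_sub_one_add_one hG (v := Fin.last (m + 1))
    (by rwa [Fin.last_sub_one, Fin.last_add_one]) u
  rwa [Fin.last_sub_one, Fin.last_add_one] at h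

theorem val_of_adj_last (hG : IsMOPFin (m + 2) G) (hear : G.Adj (Fin.last m).castSucc 0)
    {u : Fin (m + 2)} (hu : G.Adj (Fin.last (m + 1)) u) : (u : ℕ) = m ∨ (u : ℕ) = 0 := by
  rcases (adj_last_iff hG hear u).1 hu with rfl | rfl
  · exact Or.inl (Fin.val_last m)
  · exact Or.inr rfl

theorem isMOPFin_comap_castSucc (hm : 2 ≤ m) (hG : IsMOPFin (m + 2) G)
    (hear : G.Adj (Fin.last m).castSucc 0) : IsMOPFin (m + 1) (G.comap Fin.castSucc) := by
  refine ⟨by omega, fun i => ?_, fun a b c d hab hcd hcr => ?_, fun a b hne hnadj => ?_⟩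
  · cases i using Fin.lastCases with
    | last => simpa using hear
    | cast j =>
      rw [comap_adj, Fin.coeSucc_eq_succ, ← Fin.succ_castSucc, ← Fin.coeSucc_eq_succ]
      exact hG.2.1 _
  · exact hG.2.2.1 _ _ _ _ hab hcd ((crossing_castSucc_iff a b c d).2 hcr)
  · obtain ⟨c, d, hcd, hcr⟩ := hG.2.2.2 a.castSucc b.castSucc (by simpa using hne) hnadj
    have hval := (crossing_iff_val _ _ _ _).1 hcr
    simp only [Fin.val_castSucc] at hval
    have := a.isLt
    have := b.isLt
    have hc : c ≠ Fin.last (m + 1) := by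
      rintro rfl
      have := val_of_adj_last hG hear hcd
      simp only [Fin.val_last] at hval
      omega
    have hd : d ≠ Fin.last (m + 1) := by
      rintro rfl
      have := val_of_adj_last hG hear hcd.symm
      simp only [Fin.val_last] at hval
      omega
    obtain ⟨c, rfl⟩ := Fin.exists_castSucc_eq.2 hc
    obtain ⟨d, rfl⟩ := Fin.exists_castSucc_eq.2 hd
    exact ⟨c, d, hcd, (crossing_castSucc_iff a b c d).1 hcr⟩

theorem degSet_castSucc_eq_two_iff (hm : 2 ≤ m) (hG : IsMOPFin (m + 2) G)
    (hear : G.Adj (Fin.last m).castSucc 0) (v : Fin (m + 1)) :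
    degSet G v.castSucc = 2 ↔
      degSet (G.comap Fin.castSucc) v = 2 ∧ v ≠ 0 ∧ v ≠ Fin.last m := by
  rw [degSet_eq_two_iff hG, degSet_eq_two_iff (isMOPFin_comap_castSucc hm hG hear), comap_adj]
  by_cases h0 : v = 0
  · subst h0
    simp only [ne_eq, not_true_eq_false, false_and, and_false, iff_false]
    rw [Fin.castSucc_zero, Fin.zero_sub_one, zero_add, adj_last_iff hG hear]
    simp only [Fin.ext_iff, Fin.val_castSucc, Fin.val_last, Fin.val_one, Fin.val_zero]
    omega
  by_cases hl : v = Fin.last m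
  · subst hl
    simp only [ne_eq, not_true_eq_false, and_false, iff_false]
    rw [Fin.castSucc_last_add_one, adj_comm, adj_last_iff hG hear]
    simp only [Fin.ext_iff, Fin.val_castSucc, Fin.val_last, Fin.val_sub_one_of_ne_zero
      (Fin.castSucc_ne_zero_iff.2 h0), Fin.val_zero]
    omega
  rw [Fin.castSucc_sub_one h0, Fin.castSucc_add_one hl]
  simp [h0, hl]

theorem ncard_degSet_eq_two_of_ear (hm : 2 ≤ m) (hG : IsMOPFin (m + 2) G)
    (hear : G.Adj (Fin.last m).castSucc 0) :
    {v | degSet G v = 2}.ncard =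
      ({v | degSet (G.comap Fin.castSucc) v = 2} \ {0, Fin.last m}).ncard + 1 := by
  have hset : {v | degSet G v = 2} = insert (Fin.last (m + 1))
      (Fin.castSucc '' ({v | degSet (G.comap Fin.castSucc) v = 2} \ {0, Fin.last m})) := by
    ext v
    cases v using Fin.lastCases with
    | last =>
      simp only [Set.mem_ofPred_eq, Set.mem_insert_iff, true_or, iff_true]
      rwa [degSet_eq_two_iff hG, Fin.last_sub_one, Fin.last_add_one]
    | cast j =>
      simp [Fin.castSucc_ne_last, degSet_castSucc_eq_two_iff hm hG hear, and_comm]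
  rw [hset, Set.ncard_insert_of_notMem (by simp [Fin.castSucc_ne_last]),
    Set.ncard_image_of_injective _ (Fin.castSucc_injective _)]

theorem last_notMem_of_mem_internalTriangles (hG : IsMOPFin (m + 2) G)
    (hear : G.Adj (Fin.last m).castSucc 0) {T : Finset (Fin (m + 2))}
    (hT : T ∈ InternalTriangles (m + 2) G) : Fin.last (m + 1) ∉ T := by
  obtain ⟨hcard, hadj, hcons⟩ := hT
  intro hl
  obtain ⟨u, hu, hul⟩ := T.exists_mem_ne (by omega) (Fin.last (m + 1))
  rcases (adj_last_iff hG hear u).1 (hadj _ hl _ hu hul.symm) with rfl | rfl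
  · exact hcons _ hu _ hl Fin.castSucc_last_add_one.symm
  · exact hcons _ hl _ hu (Fin.last_add_one _).symm

theorem mem_internalTriangles_comap_castSucc_iff (T : Finset (Fin (m + 1))) :
    T ∈ InternalTriangles (m + 1) (G.comap Fin.castSucc) ↔
      T.map Fin.castSuccEmb ∈ InternalTriangles (m + 2) G ∧ ¬(Fin.last m ∈ T ∧ 0 ∈ T) := by
  simp only [InternalTriangles, Set.mem_ofPred_eq, Finset.card_map, Finset.forall_mem_map,
    Fin.coe_castSuccEmb, comap_adj, ne_eq, Fin.castSucc_inj,
    Fin.castSucc_eq_castSucc_add_one_iff]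
  simp only [Fin.eq_add_one_iff_val]
  constructor
  · rintro ⟨hcard, hadj, hcons⟩
    exact ⟨⟨hcard, hadj, fun a ha b hb h => hcons a ha b hb (Or.inl h)⟩,
      fun ⟨hl, h0⟩ => hcons _ hl _ h0 (Or.inr ⟨Fin.val_last m, rfl⟩)⟩
  · rintro ⟨⟨hcard, hadj, hcons⟩, hl0⟩
    refine ⟨hcard, hadj, fun a ha b hb h => ?_⟩
    rcases h with h | ⟨ha', hb'⟩
    · exact hcons a ha b hb h
    · rw [show a = Fin.last m from Fin.ext ha'] at ha
      rw [show b = 0 from Fin.ext hb'] at hb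
      exact hl0 ⟨ha, hb⟩

theorem map_castSucc_mem_internalTriangles_iff (hm : 2 ≤ m)
    (hear : G.Adj (Fin.last m).castSucc 0) {y : Fin (m + 1)}
    (hyl : G.Adj (Fin.last m).castSucc y.castSucc) (hy0 : G.Adj 0 y.castSucc) :
    ({Fin.last m, 0, y} : Finset (Fin (m + 1))).map Fin.castSuccEmb ∈
        InternalTriangles (m + 2) G ↔ y ≠ 1 ∧ y ≠ Fin.last m - 1 := by
  have hyl' : (y : ℕ) ≠ m := fun h => G.ne_of_adj hyl (by simp [Fin.ext_iff, h])
  have hy0' : (y : ℕ) ≠ 0 := fun h => G.ne_of_adj hy0 (by simp [Fin.ext_iff, h])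
  have hcard : ({Fin.last m, 0, y} : Finset (Fin (m + 1))).card = 3 := by
    rw [Finset.card_eq_three]
    exact ⟨_, _, _, by simp [Fin.ext_iff]; omega, by simp [Fin.ext_iff]; omega,
      by simp [Fin.ext_iff]; omega, rfl⟩
  simp only [InternalTriangles, Set.mem_ofPred_eq, Finset.card_map, hcard, true_and,
    Finset.forall_mem_map, Finset.mem_insert, Finset.mem_singleton, forall_eq_or_imp, forall_eq,
    Fin.coe_castSuccEmb, ne_eq, Fin.castSucc_eq_castSucc_add_one_iff]
  have hl1 : ((Fin.last m - 1 : Fin (m + 1)) : ℕ) = m - 1 := by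
    rw [Fin.val_sub_one_of_ne_zero (by simp [Fin.ext_iff]; omega), Fin.val_last]
  simp only [Fin.ext_iff, Fin.val_last, Fin.val_zero, hl1,
    Fin.val_one_of_two_le (n := m + 1) (by omega)]
  simp [hear, hear.symm, hyl, hyl.symm, hy0, hy0.symm]
  omega

theorem internalTriangles_subset_range_map_castSucc (hG : IsMOPFin (m + 2) G)
    (hear : G.Adj (Fin.last m).castSucc 0) :
    InternalTriangles (m + 2) G ⊆ Set.range (Finset.map Fin.castSuccEmb) := by
  intro T hT
  have hsub : T ⊆ Finset.univ.map Fin.castSuccEmb := fun x hx => by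
    simpa [Fin.exists_castSucc_eq] using
      ne_of_mem_of_not_mem hx (last_notMem_of_mem_internalTriangles hG hear hT)
  obtain ⟨u, -, rfl⟩ := Finset.subset_map_iff.1 hsub
  exact ⟨u, rfl⟩

theorem ncard_internalTriangles_containing_last_zero (hm : 2 ≤ m) (hG : IsMOPFin (m + 2) G)
    (hear : G.Adj (Fin.last m).castSucc 0) :
    {T : Finset (Fin (m + 1)) |
        T.map Fin.castSuccEmb ∈ InternalTriangles (m + 2) G ∧ Fin.last m ∈ T ∧ 0 ∈ T}.ncard =
      if degSet (G.comap Fin.castSucc) 0 = 2 ∨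
        degSet (G.comap Fin.castSucc) (Fin.last m) = 2 then 0 else 1 := by
  have hG' := isMOPFin_comap_castSucc hm hG hear
  obtain ⟨y, hyl, hy0⟩ := exists_adj_last_adj_zero hG'
  set N := {T : Finset (Fin (m + 1)) |
    T.map Fin.castSuccEmb ∈ InternalTriangles (m + 2) G ∧ Fin.last m ∈ T ∧ 0 ∈ T}
  have hthrough : ∀ T ∈ N, T = {Fin.last m, 0, y} := by
    rintro T ⟨⟨hcard, hadj, -⟩, hl, h0⟩
    refine SimpleGraph.IsNClique.eq_of_unique_common_neighbor ⟨fun a ha b hb hab => ?_, ?_⟩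
      hl h0 fun z hzl hz0 => eq_of_adj_last_of_adj_zero hG' hzl hz0 hyl hy0
    · exact hadj _ (Finset.mem_map_of_mem _ ha) _ (Finset.mem_map_of_mem _ hb)
        (by simpa using hab)
    · simpa using hcard
  have hnew := map_castSucc_mem_internalTriangles_iff hm hear hyl hy0
  simp only [degSet_zero_eq_two_iff hG' hyl hy0, degSet_last_eq_two_iff hG' hyl hy0]
  split_ifs with h
  · refine (Set.ncard_eq_zero (Set.toFinite _)).2 (Set.eq_empty_of_forall_notMem fun T hT => ?_)
    have hT' := hT.1
    rw [hthrough T hT, hnew] at hT'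
    tauto
  · exact Set.ncard_eq_one.2 ⟨{Fin.last m, 0, y}, Set.eq_singleton_iff_unique_mem.2
      ⟨⟨hnew.2 (by tauto), by simp, by simp⟩, hthrough⟩⟩

theorem ncard_internalTriangles_of_ear (hm : 2 ≤ m) (hG : IsMOPFin (m + 2) G)
    (hear : G.Adj (Fin.last m).castSucc 0) :
    (InternalTriangles (m + 2) G).ncard +
        (if degSet (G.comap Fin.castSucc) 0 = 2 ∨
          degSet (G.comap Fin.castSucc) (Fin.last m) = 2 then 1 else 0) =
      (InternalTriangles (m + 1) (G.comap Fin.castSucc)).ncard + 1 := by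
  set N := {T : Finset (Fin (m + 1)) |
    T.map Fin.castSuccEmb ∈ InternalTriangles (m + 2) G ∧ Fin.last m ∈ T ∧ 0 ∈ T} with hN
  have hsplit : Finset.map Fin.castSuccEmb ⁻¹' InternalTriangles (m + 2) G =
      InternalTriangles (m + 1) (G.comap Fin.castSucc) ∪ N := by
    ext T
    simp only [hN, Set.mem_preimage, Set.mem_union, Set.mem_ofPred_eq,
      mem_internalTriangles_comap_castSucc_iff]
    tauto
  have hdisj : Disjoint (InternalTriangles (m + 1) (G.comap Fin.castSucc)) N :=
    Set.disjoint_left.2 fun T hT hT' =>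
      ((mem_internalTriangles_comap_castSucc_iff T).1 hT).2 hT'.2
  rw [← Set.ncard_preimage_of_injective_subset_range (Finset.map_injective _)
      (internalTriangles_subset_range_map_castSucc hG hear), hsplit, Set.ncard_union_eq hdisj,
    ncard_internalTriangles_containing_last_zero hm hG hear]
  split_ifs <;> rfl

end EarDeletion

theorem exists_ear_deletion {m : ℕ} (hm : 2 ≤ m) {G : SimpleGraph (Fin (m + 2))}
    (hG : IsMOPFin (m + 2) G) :
    ∃ G' : SimpleGraph (Fin (m + 1)), IsMOPFin (m + 1) G' ∧
      {v | degSet G v = 2}.ncard = ({v | degSet G' v = 2} \ {0, Fin.last m}).ncard + 1 ∧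
      (InternalTriangles (m + 2) G).ncard +
          (if degSet G' 0 = 2 ∨ degSet G' (Fin.last m) = 2 then 1 else 0) =
        (InternalTriangles (m + 1) G').ncard + 1 := by
  obtain ⟨v, hv⟩ := exists_degSet_eq_two hG (by omega)
  have hG₁ := isMOPFin_comap_addRight hG (v + 1)
  have hlast : Equiv.addRight (v + 1) (Fin.last (m + 1)) = v := by
    show Fin.last (m + 1) + (v + 1) = v
    rw [add_comm v, ← add_assoc, Fin.last_add_one, zero_add]
  have hear : (G.comap (Equiv.addRight (v + 1))).Adj (Fin.last m).castSucc 0 := by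
    have h := degSet_comap_equiv G (Equiv.addRight (v + 1)) (Fin.last (m + 1))
    rwa [hlast, hv, degSet_eq_two_iff hG₁, Fin.last_sub_one, Fin.last_add_one] at h
  refine ⟨_, isMOPFin_comap_castSucc hm hG₁ hear, ?_, ?_⟩
  · rw [← ncard_setOf_degSet_comap_equiv G (Equiv.addRight (v + 1)),
      ncard_degSet_eq_two_of_ear hm hG₁ hear]
  · rw [← ncard_internalTriangles_comap_addRight G (v + 1),
      ncard_internalTriangles_of_ear hm hG₁ hear]

theorem degSet_eq_two_of_isMOPFin_three {H : SimpleGraph (Fin 3)} (hH : IsMOPFin 3 H)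
    (v : Fin 3) : degSet H v = 2 := by
  have h : ∀ u : Fin 3, u - 1 = u + 1 + 1 := by decide
  rw [degSet_eq_two_iff hH, h]
  exact (hH.2.1 _).symm

theorem internalTriangles_three_eq_empty (H : SimpleGraph (Fin 3)) :
    InternalTriangles 3 H = ∅ := by
  refine Set.eq_empty_of_forall_notMem fun T ⟨hcard, _, hcons⟩ => ?_
  have hT : T = Finset.univ := Finset.eq_univ_of_card T hcard
  exact hcons 0 (by simp [hT]) 1 (by simp [hT]) rfl

theorem ncard_degSet_eq_two_sdiff_add {m : ℕ} {H : SimpleGraph (Fin (m + 1))}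
    (hH : IsMOPFin (m + 1) H) (hm : 3 ≤ m) :
    ({v | degSet H v = 2} \ {0, Fin.last m}).ncard +
        (if degSet H 0 = 2 ∨ degSet H (Fin.last m) = 2 then 1 else 0) =
      {v | degSet H v = 2}.ncard := by
  have hnot := not_degSet_add_one_eq_two hH (by omega) (v := Fin.last m)
  rw [Fin.last_add_one] at hnot
  by_cases h0 : degSet H 0 = 2
  · rw [if_pos (Or.inl h0), Set.insert_eq, ← Set.sdiff_sdiff,
      Set.sdiff_singleton_eq_self (fun h => hnot h.1 h0),
      Set.ncard_sdiff_singleton_add_one (by exact h0)]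
  · rw [Set.sdiff_insert_of_notMem (by exact h0)]
    by_cases hl : degSet H (Fin.last m) = 2
    · rw [if_pos (Or.inr hl), Set.ncard_sdiff_singleton_add_one (by exact hl)]
    · rw [if_neg (by tauto), Set.sdiff_singleton_eq_self (by exact hl), add_zero]

theorem ncard_degSet_eq_two_eq_add_two (m : ℕ) (hm : 2 ≤ m) (G : SimpleGraph (Fin (m + 2)))
    (hG : IsMOPFin (m + 2) G) :
    {v | degSet G v = 2}.ncard = (InternalTriangles (m + 2) G).ncard + 2 := by
  induction m, hm using Nat.le_induction with
  | base =>
    obtain ⟨G', hG', hD, hT⟩ := exists_ear_deletion le_rfl hG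
    have hD' : {v | degSet G' v = 2} \ {0, Fin.last 2} = {1} := by
      ext v
      fin_cases v <;> simp [degSet_eq_two_of_isMOPFin_three hG', Fin.ext_iff]
    rw [hD', Set.ncard_singleton] at hD
    rw [show InternalTriangles (2 + 1) G' = ∅ from internalTriangles_three_eq_empty G',
      Set.ncard_empty] at hT
    simp only [degSet_eq_two_of_isMOPFin_three hG', true_or, if_true] at hT
    omega
  | succ m hm ih =>
    obtain ⟨G', hG', hD, hT⟩ := exists_ear_deletion (by omega) hG
    have hsplit := ncard_degSet_eq_two_sdiff_add hG' (by omega)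
    -- `ih` restated at `Fin (m + 1 + 1)`, the form in which `hT` and `hsplit` mention `G'`
    have ih' : {v | degSet G' v = 2}.ncard = (InternalTriangles (m + 1 + 1) G').ncard + 2 :=
      ih G' hG'
    split_ifs at hT hsplit <;> omega

/-- A maximal outerplanar graph of order `n ≥ 4` with `k` internal
triangles has exactly `k + 2` vertices of degree 2. -/
theorem stmt_6 (n k : ℕ) [NeZero n] (hn : 4 ≤ n) (G : SimpleGraph (Fin n))
    (hG : IsMOPFin n G) (hk : (InternalTriangles n G).ncard = k) :
    {v : Fin n | degSet G v = 2}.ncard = k + 2 := by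
  obtain ⟨m, rfl⟩ : ∃ m, n = m + 2 := ⟨n - 2, by omega⟩
  rw [← hk]
  exact ncard_degSet_eq_two_eq_add_two m (by omega) G hG
end

section
/- Let G_n be the straight linear 2-tree on n ≥ 7 vertices. Then G_n is (up to isomorphism) the unique maximal outerplanar graph of order n with maximum degree 4; that is, a maximal outerplanar graph G of order n ≥ 7 satisfies Δ(G) = 4 if and only if G ≅ G_n. -/
/-!
Along the Hamiltonian cycle `0, 1, …, n - 1`, every chord `ab` bounds a triangle `acb` on the
side of the arc from `a` to `b`. If `Δ ≤ 4` and the end `a` already has a neighbour off the arc,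
then `a` has room for only one neighbour inside it, so `c = a + 1`, and the shorter chord
`(a + 1) b` has its end `b` saturated by `a`. Inductively, the triangulation inside such an arc is
a zigzag.

A maximal outerplanar graph has an ear `e`. When `n ≥ 7`, the triangle on the other side of the
chord `(e - 1) (e + 1)` cannot be internal (its vertices would be forced to have five
neighbours), so up to reflecting the cycle it is `(e - 1) (e + 1) (e + 2)`. The zigzag on the arc
from `e + 2` to `e - 1`, together with `e` and `e + 1`, is the straight linear 2-tree. Conversely,
the straight linear 2-tree has maximum degree 4.
-/

open SimpleGraph

open Fin.NatCast

namespace Fin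

variable {n : ℕ}

lemma val_sub_eq_ite (a b : Fin n) :
    (b - a).val = if a.val ≤ b.val then b.val - a.val else b.val + n - a.val := by
  split_ifs with h
  · exact coe_sub_iff_le.mpr h
  · rw [coe_sub_iff_lt.mpr (by omega)]
    omega

variable [NeZero n]

lemma eq_of_val_sub_eq {a x y : Fin n} (h : (x - a).val = (y - a).val) : x = y :=
  sub_left_inj.mp (Fin.ext h)

lemma val_sub_eq_zero_iff {a x : Fin n} : (x - a).val = 0 ↔ x = a := by
  rw [val_eq_zero_iff, sub_eq_zero]

lemma val_sub_eq_ite_sub (a x y : Fin n) :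
    (y - x).val = if (x - a).val ≤ (y - a).val then (y - a).val - (x - a).val
      else (y - a).val + n - (x - a).val := by
  rw [← val_sub_eq_ite, sub_sub_sub_cancel_right]

lemma val_add_one_sub (a x : Fin n) :
    (x + 1 - a).val = if (x - a).val = n - 1 then 0 else (x - a).val + 1 := by
  obtain ⟨m, rfl⟩ := Nat.exists_eq_succ_of_ne_zero (NeZero.ne n)
  rw [add_sub_right_comm, val_add_one]
  simp [Fin.ext_iff]

lemma val_sub_one_sub (a x : Fin n) :
    (x - 1 - a).val = if (x - a).val = 0 then n - 1 else (x - a).val - 1 := by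
  obtain ⟨m, rfl⟩ := Nat.exists_eq_succ_of_ne_zero (NeZero.ne n)
  rw [sub_right_comm, coe_sub_one]
  simp only [Fin.ext_iff, val_zero, Nat.succ_sub_one]

lemma val_add_one_sub_self (a : Fin n) (hn : 1 < n) : (a + 1 - a).val = 1 := by
  rw [val_add_one_sub, sub_self, val_zero, if_neg (by omega)]

lemma val_add_two_sub_self (a : Fin n) (hn : 2 < n) : (a + 2 - a).val = 2 := by
  simp [Nat.mod_eq_of_lt hn]

lemma val_sub_one_sub_self (a : Fin n) : (a - 1 - a).val = n - 1 := by
  rw [val_sub_one_sub, sub_self, val_zero, if_pos rfl]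

lemma val_add_natCast_sub (a : Fin n) {u : ℕ} (hu : u < n) : (a + (u : Fin n) - a).val = u := by
  rw [add_sub_cancel_left, val_natCast, Nat.mod_eq_of_lt hu]

end Fin

lemma strictBtw_neg_iff {n : ℕ} [NeZero n] {a x b : Fin n} :
    StrictBtw (-a) (-x) (-b) ↔ StrictBtw b x a := by
  have hx := (x - b).isLt
  have ha := (a - b).isLt
  simp only [StrictBtw, neg_sub_neg, Fin.val_sub_eq_ite_sub b x a]
  split_ifs <;> omega

lemma crossing_neg_iff {n : ℕ} [NeZero n] {a b c d : Fin n} :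
    Crossing (-b) (-a) (-c) (-d) ↔ Crossing a b c d := by
  simp only [Crossing, strictBtw_neg_iff]

section Degree

variable {n : ℕ}

lemma length_le_degSet {V : Type*} [Finite V] {G : SimpleGraph V} {v : V} {xs : List V}
    (hxs : xs.Nodup) (hadj : ∀ x ∈ xs, G.Adj v x) : xs.length ≤ degSet G v := by
  classical
  rw [← List.toFinset_card_of_nodup hxs, ← Set.ncard_coe_finset]
  exact Set.ncard_le_ncard fun x hx => hadj x (by simpa using hx)

lemma degSet_le_maxDeg (G : SimpleGraph (Fin n)) (v : Fin n) : degSet G v ≤ maxDeg G :=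
  Finset.le_sup (Finset.mem_univ v)

lemma false_of_five_adj {G : SimpleGraph (Fin n)} (hdeg : maxDeg G ≤ 4) (a : Fin n)
    {v x₁ x₂ x₃ x₄ x₅ : Fin n} (h₁ : G.Adj v x₁) (h₂ : G.Adj v x₂) (h₃ : G.Adj v x₃)
    (h₄ : G.Adj v x₄) (h₅ : G.Adj v x₅) (h₁₂ : (x₁ - a).val < (x₂ - a).val)
    (h₂₃ : (x₂ - a).val < (x₃ - a).val) (h₃₄ : (x₃ - a).val < (x₄ - a).val)
    (h₄₅ : (x₄ - a).val < (x₅ - a).val) : False := by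
  have hx : [(x₁ - a).val, (x₂ - a).val, (x₃ - a).val, (x₄ - a).val, (x₅ - a).val].Nodup := by
    simp only [List.nodup_cons, List.mem_cons, List.not_mem_nil, List.nodup_nil, or_false,
      not_false_eq_true, and_true]
    omega
  have h := (length_le_degSet (xs := [x₁, x₂, x₃, x₄, x₅]) (G := G) (v := v)
    (List.Nodup.of_map (fun x => (x - a).val) hx) (by simp [h₁, h₂, h₃, h₄, h₅])).trans
    (degSet_le_maxDeg G v)
  simp only [List.length_cons, List.length_nil] at h
  omega

lemma degSet_iso_apply {V W : Type*} {G : SimpleGraph V} {H : SimpleGraph W} (f : G ≃g H)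
    (v : V) : degSet H (f v) = degSet G v := by
  rw [degSet, degSet, ← f.image_neighborSet, Set.ncard_image_of_injective _ f.injective]

lemma maxDeg_le_of_iso {G H : SimpleGraph (Fin n)} (f : G ≃g H) : maxDeg G ≤ maxDeg H :=
  Finset.sup_le fun v _ => degSet_iso_apply f v ▸ degSet_le_maxDeg H (f v)

lemma maxDeg_eq_of_iso {G H : SimpleGraph (Fin n)} (f : G ≃g H) : maxDeg G = maxDeg H :=
  (maxDeg_le_of_iso f).antisymm (maxDeg_le_of_iso f.symm)

lemma degSet_linear2Tree_le (v : Fin n) : degSet (linear2Tree n) v ≤ 4 := by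
  classical
  have hsub : Fin.val '' (linear2Tree n).neighborSet v ⊆
      ↑({v.val - 2, v.val - 1, v.val + 1, v.val + 2} : Finset ℕ) := by
    rintro _ ⟨j, ⟨hne, hj₁, hj₂⟩, rfl⟩
    have := Fin.val_ne_of_ne hne
    simp only [Finset.coe_insert, Finset.coe_singleton, Set.mem_insert_iff,
      Set.mem_singleton_iff]
    omega
  rw [degSet, ← Set.ncard_image_of_injective _ Fin.val_injective]
  exact (Set.ncard_le_ncard hsub).trans ((Set.ncard_coe_finset _).trans_le Finset.card_le_four)

lemma maxDeg_linear2Tree (hn : 5 ≤ n) : maxDeg (linear2Tree n) = 4 := by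
  refine le_antisymm (Finset.sup_le fun v _ => degSet_linear2Tree_le v) ?_
  have h := length_le_degSet (G := linear2Tree n) (v := ⟨2, by omega⟩)
    (xs := [⟨0, by omega⟩, ⟨1, by omega⟩, ⟨3, by omega⟩, ⟨4, by omega⟩])
    (by simp [Fin.ext_iff]) (by simp [linear2Tree, Fin.ext_iff]; omega)
  exact h.trans (degSet_le_maxDeg _ _)

lemma nonempty_iso_linear2Tree_of_adj_iff {G : SimpleGraph (Fin n)} {w : Fin n → Fin n}
    (hw : Function.Injective w)
    (hadj : ∀ i j : Fin n, i.val < j.val → (G.Adj (w i) (w j) ↔ j.val ≤ i.val + 2)) :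
    Nonempty (G ≃g linear2Tree n) := by
  refine ⟨(⟨Equiv.ofBijective w (Finite.injective_iff_bijective.mp hw), ?_⟩ :
    linear2Tree n ≃g G).symm⟩
  intro i j
  change G.Adj (w i) (w j) ↔ i ≠ j ∧ i.val ≤ j.val + 2 ∧ j.val ≤ i.val + 2
  rcases lt_trichotomy i.val j.val with hij | hij | hij
  · rw [hadj i j hij, ← Fin.val_ne_iff]
    omega
  · simp [Fin.ext hij]
  · rw [adj_comm, hadj j i hij, ← Fin.val_ne_iff]
    omega

end Degree

namespace IsMOPFin

variable {n : ℕ} [NeZero n] {G : SimpleGraph (Fin n)}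

lemma three_le (hG : IsMOPFin n G) : 3 ≤ n := hG.1

lemma adj_add_one (hG : IsMOPFin n G) (i : Fin n) : G.Adj i (i + 1) := hG.2.1 i

lemma adj_sub_one (hG : IsMOPFin n G) (i : Fin n) : G.Adj (i - 1) i := by
  simpa using hG.adj_add_one (i - 1)

lemma not_crossing (hG : IsMOPFin n G) {a b c d : Fin n} (hab : G.Adj a b) (hcd : G.Adj c d) :
    ¬ Crossing a b c d :=
  hG.2.2.1 a b c d hab hcd

lemma exists_crossing (hG : IsMOPFin n G) {a b : Fin n} (hne : a ≠ b) (hab : ¬ G.Adj a b) :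
    ∃ c d, G.Adj c d ∧ Crossing a b c d :=
  hG.2.2.2 a b hne hab

lemma comap_neg (hG : IsMOPFin n G) : IsMOPFin n (G.comap Neg.neg) := by
  refine ⟨hG.three_le, fun i => ?_, fun a b c d hab hcd hcr => ?_, fun a b hne hab => ?_⟩
  · change G.Adj (-i) (-(i + 1))
    rw [neg_add']
    exact (hG.adj_sub_one (-i)).symm
  · exact hG.not_crossing hab.symm hcd (crossing_neg_iff.mpr hcr)
  · obtain ⟨c, d, hcd, hcr⟩ :=
      hG.exists_crossing (neg_injective.ne hne.symm) fun h => hab h.symm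
    exact ⟨-c, -d, by simpa using hcd, crossing_neg_iff.mp (by simpa using hcr)⟩

lemma exists_apex (hG : IsMOPFin n G) {a b : Fin n} (hab : G.Adj a b) (h2 : 2 ≤ (b - a).val) :
    ∃ c, StrictBtw a c b ∧ G.Adj a c ∧ G.Adj c b := by
  classical
  have hn := hG.three_le
  have hsucc : StrictBtw a (a + 1) b ∧ G.Adj a (a + 1) := by
    refine ⟨?_, hG.adj_add_one a⟩
    simp only [StrictBtw, Fin.val_add_one_sub, sub_self, Fin.val_zero]
    split_ifs <;> omega
  -- the neighbour of `a` inside the arc that is farthest from `a` is the apex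
  obtain ⟨c, hc, hcmax⟩ := Finset.exists_max_image
    (Finset.univ.filter fun c => StrictBtw a c b ∧ G.Adj a c) (fun c => (c - a).val)
    ⟨a + 1, by simpa using hsucc⟩
  simp only [Finset.mem_filter, Finset.mem_univ, true_and] at hc hcmax
  obtain ⟨⟨hc0, hcb⟩, hac⟩ := hc
  refine ⟨c, ⟨hc0, hcb⟩, hac, ?_⟩
  by_contra hcb'
  obtain ⟨e, f, hef, ⟨he0, heb⟩, ⟨hf0, hfc⟩⟩ :=
    hG.exists_crossing (fun h => by rw [h] at hcb; omega) hcb'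
  have hbn := (b - a).isLt
  have hen := (e - a).isLt
  have hfn := (f - a).isLt
  simp only [Fin.val_sub_eq_ite_sub a c e, Fin.val_sub_eq_ite_sub a c b] at he0 heb
  simp only [Fin.val_sub_eq_ite_sub a b f, Fin.val_sub_eq_ite_sub a b c] at hf0 hfc
  have he : (c - a).val < (e - a).val ∧ (e - a).val < (b - a).val := by
    split_ifs at he0 heb <;> omega
  have hf : (f - a).val = 0 ∨ (0 < (f - a).val ∧ (f - a).val < (c - a).val) ∨
      (b - a).val < (f - a).val := by
    split_ifs at hf0 hfc <;> omega
  rcases hf with hf | hf | hf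
  · rw [Fin.val_sub_eq_zero_iff.mp hf] at hef
    have := hcmax e ⟨⟨by omega, he.2⟩, hef.symm⟩
    omega
  · refine hG.not_crossing hac hef.symm ⟨⟨hf.1, hf.2⟩, ?_⟩
    simp only [StrictBtw, Fin.val_sub_eq_ite_sub a c e, Fin.val_sub_eq_ite_sub a c a, sub_self,
      Fin.val_zero]
    split_ifs <;> omega
  · refine hG.not_crossing hab hef ⟨⟨by omega, he.2⟩, ?_⟩
    simp only [StrictBtw, Fin.val_sub_eq_ite_sub a b f, Fin.val_sub_eq_ite_sub a b a, sub_self,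
      Fin.val_zero]
    split_ifs <;> omega

lemma exists_ear_of_adj (hG : IsMOPFin n G) {a b : Fin n} (hab : G.Adj a b)
    (h2 : 2 ≤ (b - a).val) : ∃ e, G.Adj (e - 1) (e + 1) := by
  induction hℓ : (b - a).val using Nat.strong_induction_on generalizing a b with
  | _ ℓ ih =>
  obtain ⟨c, ⟨hc0, hcb⟩, hac, hcb'⟩ := hG.exists_apex hab h2
  have hsplit : (b - c).val = (b - a).val - (c - a).val := by
    rw [Fin.val_sub_eq_ite_sub a c b, if_pos hcb.le]
  by_cases hℓ2 : ℓ = 2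
  · refine ⟨a + 1, ?_⟩
    rwa [add_sub_cancel_right, add_assoc, one_add_one_eq_two, ← Fin.eq_of_val_sub_eq
      ((hℓ.trans hℓ2).trans (Fin.val_add_two_sub_self a (by have := (b - a).isLt; omega)).symm)]
  by_cases hc1 : (c - a).val = 1
  · exact ih _ (by omega) hcb' (by omega) rfl
  · exact ih _ (by omega) hac (by omega) rfl

lemma exists_ear (hG : IsMOPFin n G) : ∃ e, G.Adj (e - 1) (e + 1) := by
  have hn := hG.three_le
  refine hG.exists_ear_of_adj (hG.adj_add_one 0).symm ?_
  rw [Fin.val_sub_eq_ite_sub 0 (0 + 1) 0, Fin.val_add_one_sub]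
  simp only [sub_zero, Fin.val_zero]
  split_ifs <;> omega

lemma adj_iff_of_ear (hG : IsMOPFin n G) {e : Fin n} (he : G.Adj (e - 1) (e + 1)) (z : Fin n) :
    G.Adj e z ↔ (z - e).val = 1 ∨ (z - e).val = n - 1 := by
  have hn := hG.three_le
  have h1 := Fin.val_add_one_sub_self e (by omega)
  have h2 := Fin.val_sub_one_sub_self e
  constructor
  · intro hez
    by_contra hz
    have hz0 : (z - e).val ≠ 0 := fun h => G.ne_of_adj hez (Fin.val_sub_eq_zero_iff.mp h).symm
    have hzn := (z - e).isLt
    refine hG.not_crossing he hez ⟨?_, ?_⟩ <;>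
      simp only [StrictBtw, Fin.val_sub_eq_ite_sub e (e - 1) e,
        Fin.val_sub_eq_ite_sub e (e - 1) (e + 1), Fin.val_sub_eq_ite_sub e (e + 1) z,
        Fin.val_sub_eq_ite_sub e (e + 1) (e - 1), h1, h2, sub_self, Fin.val_zero] <;>
      split_ifs <;> omega
  · rintro (hz | hz)
    · rw [Fin.eq_of_val_sub_eq (hz.trans h1.symm)]
      exact hG.adj_add_one e
    · rw [Fin.eq_of_val_sub_eq (hz.trans h2.symm)]
      exact (hG.adj_sub_one e).symm

lemma adj_add_one_iff_of_ear (hG : IsMOPFin n G) {e : Fin n} (he : G.Adj (e - 1) (e + 1))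
    (hc : G.Adj (e - 1) (e + 2)) (z : Fin n) :
    G.Adj (e + 1) z ↔ (z - e).val = 0 ∨ (z - e).val = 2 ∨ (z - e).val = n - 1 := by
  have hn := hG.three_le
  have h1 := Fin.val_add_one_sub_self e (by omega)
  have h2 := Fin.val_add_two_sub_self e (by omega)
  have h3 := Fin.val_sub_one_sub_self e
  constructor
  · intro hz
    by_contra hz'
    have hz1 : (z - e).val ≠ 1 := fun h =>
      G.ne_of_adj hz (Fin.eq_of_val_sub_eq (h1.trans h.symm))
    have hzn := (z - e).isLt
    refine hG.not_crossing hc.symm hz.symm ⟨?_, ?_⟩ <;>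
      simp only [StrictBtw, Fin.val_sub_eq_ite_sub e (e + 2) z,
        Fin.val_sub_eq_ite_sub e (e + 2) (e - 1), Fin.val_sub_eq_ite_sub e (e - 1) (e + 1),
        Fin.val_sub_eq_ite_sub e (e - 1) (e + 2), h1, h2, h3] <;>
      split_ifs <;> omega
  · rintro (hz | hz | hz)
    · rw [Fin.val_sub_eq_zero_iff.mp hz]
      exact (hG.adj_add_one e).symm
    · rw [Fin.eq_of_val_sub_eq (hz.trans h2.symm), ← one_add_one_eq_two, ← add_assoc]
      exact hG.adj_add_one (e + 1)
    · rw [Fin.eq_of_val_sub_eq (hz.trans h3.symm)]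
      exact he.symm

end IsMOPFin

/-- Adjacency in the zigzag triangulation of the polygon `0, 1, …, ℓ`: the sides `u, u + 1` and
the chords `uv` with `u + v ∈ {s, s + 1}`. For `s = ℓ` the vertex `0` is an ear, for `s = ℓ - 1`
the vertex `ℓ` is. -/
def Zigzag (s u v : ℕ) : Prop :=
  (u + 1 = v ∨ v + 1 = u) ∨ (u ≠ v ∧ (u + v = s ∨ u + v = s + 1))

lemma zigzag_comm {s u v : ℕ} : Zigzag s u v ↔ Zigzag s v u := by
  unfold Zigzag
  omega

section Zigzag

variable {n : ℕ} [NeZero n] {G : SimpleGraph (Fin n)}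

def IsZigzagOn (G : SimpleGraph (Fin n)) (a : Fin n) (ℓ s : ℕ) : Prop :=
  ∀ x y : Fin n, (x - a).val ≤ ℓ → (y - a).val ≤ ℓ →
    (G.Adj x y ↔ Zigzag s (x - a).val (y - a).val)

/-- With `a - 1`, `a + 1` and `b`, such an outer neighbour leaves `a` no room for a fifth one when
`Δ ≤ 4`. -/
def OuterAdjLeft (G : SimpleGraph (Fin n)) (a b : Fin n) : Prop :=
  ∃ x, G.Adj a x ∧ x ≠ a - 1 ∧ x ≠ b ∧ ¬ StrictBtw a x b

def OuterAdjRight (G : SimpleGraph (Fin n)) (a b : Fin n) : Prop :=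
  ∃ x, G.Adj b x ∧ x ≠ b + 1 ∧ x ≠ a ∧ ¬ StrictBtw a x b

variable {a b c : Fin n}

lemma OuterAdjLeft.val_sub_eq_one (hout : OuterAdjLeft G a b) (hG : IsMOPFin n G)
    (hdeg : maxDeg G ≤ 4) (hab : G.Adj a b) (hc : StrictBtw a c b) (hac : G.Adj a c) :
    (c - a).val = 1 := by
  obtain ⟨x, hax, hx1, hxb, hxout⟩ := hout
  by_contra hc1
  have hxa : (x - a).val ≠ 0 := fun h => G.ne_of_adj hax (Fin.val_sub_eq_zero_iff.mp h).symm
  have hx1' : (x - a).val ≠ n - 1 := fun h =>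
    hx1 (Fin.eq_of_val_sub_eq (h.trans (Fin.val_sub_one_sub_self a).symm))
  have hxb' : (x - a).val ≠ (b - a).val := fun h => hxb (Fin.eq_of_val_sub_eq h)
  have hxn := (x - a).isLt
  have h1 := Fin.val_add_one_sub_self a (by omega)
  have h2 := Fin.val_sub_one_sub_self a
  unfold StrictBtw at hc hxout
  exact false_of_five_adj hdeg a (hG.adj_add_one a) hac hab hax (hG.adj_sub_one a).symm
    (by omega) (by omega) (by omega) (by omega)

lemma OuterAdjRight.val_sub_eq_pred (hout : OuterAdjRight G a b) (hG : IsMOPFin n G)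
    (hdeg : maxDeg G ≤ 4) (hab : G.Adj a b) (hc : StrictBtw a c b) (hcb : G.Adj c b) :
    (c - a).val = (b - a).val - 1 := by
  obtain ⟨x, hbx, hx1, hxa, hxout⟩ := hout
  by_contra hc1
  have hxb : (x - a).val ≠ (b - a).val := fun h =>
    G.ne_of_adj hbx (Fin.eq_of_val_sub_eq h).symm
  have hx1' : (x - a).val ≠ (b + 1 - a).val := fun h => hx1 (Fin.eq_of_val_sub_eq h)
  have hxa' : (x - a).val ≠ 0 := fun h => hxa (Fin.val_sub_eq_zero_iff.mp h)
  have hxn := (x - a).isLt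
  have h0 : (a - a).val = 0 := by simp
  have h1 := Fin.val_add_one_sub a b
  have h2 := Fin.val_sub_one_sub a b
  unfold StrictBtw at hc hxout
  split_ifs at h1 h2 <;>
    exact false_of_five_adj hdeg a hab.symm hcb.symm (hG.adj_sub_one b).symm (hG.adj_add_one b)
      hbx (by omega) (by omega) (by omega) (by omega)

lemma OuterAdjLeft.adj_iff (hout : OuterAdjLeft G a b) (hG : IsMOPFin n G)
    (hdeg : maxDeg G ≤ 4) (hab : G.Adj a b) {y : Fin n} (hy : (y - a).val ≤ (b - a).val) :
    G.Adj a y ↔ (y - a).val = 1 ∨ (y - a).val = (b - a).val := by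
  have hn := hG.three_le
  constructor
  · intro hay
    have hy0 : (y - a).val ≠ 0 := fun h => G.ne_of_adj hay (Fin.val_sub_eq_zero_iff.mp h).symm
    by_cases hyb : (y - a).val = (b - a).val
    · exact Or.inr hyb
    · exact Or.inl (hout.val_sub_eq_one hG hdeg hab ⟨by omega, by omega⟩ hay)
  · rintro (hy1 | hyb)
    · rw [Fin.eq_of_val_sub_eq (hy1.trans (Fin.val_add_one_sub_self a (by omega)).symm)]
      exact hG.adj_add_one a
    · rwa [Fin.eq_of_val_sub_eq hyb]

lemma OuterAdjRight.adj_iff (hout : OuterAdjRight G a b) (hG : IsMOPFin n G)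
    (hdeg : maxDeg G ≤ 4) (hab : G.Adj a b) (h2 : 2 ≤ (b - a).val) {x : Fin n}
    (hx : (x - a).val ≤ (b - a).val) :
    G.Adj x b ↔ (x - a).val = 0 ∨ (x - a).val = (b - a).val - 1 := by
  have hbm : (b - 1 - a).val = (b - a).val - 1 := by
    rw [Fin.val_sub_one_sub, if_neg (by omega)]
  constructor
  · intro hxb
    have hxb' : (x - a).val ≠ (b - a).val := fun h => G.ne_of_adj hxb (Fin.eq_of_val_sub_eq h)
    by_cases hx0 : (x - a).val = 0
    · exact Or.inl hx0
    · exact Or.inr (hout.val_sub_eq_pred hG hdeg hab ⟨by omega, by omega⟩ hxb)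
  · rintro (hx0 | hxb)
    · rwa [Fin.val_sub_eq_zero_iff.mp hx0]
    · rw [Fin.eq_of_val_sub_eq (hxb.trans hbm.symm)]
      exact hG.adj_sub_one b

lemma isZigzagOn_one (hab : G.Adj a b) (hb : (b - a).val = 1) (s : ℕ) :
    IsZigzagOn G a 1 s := by
  have hmem : ∀ z : Fin n, (z - a).val ≤ 1 → z = a ∨ z = b := fun z hz => by
    rcases Nat.le_one_iff_eq_zero_or_eq_one.mp hz with h | h
    · exact Or.inl (Fin.val_sub_eq_zero_iff.mp h)
    · exact Or.inr (Fin.eq_of_val_sub_eq (h.trans hb.symm))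
  intro x y hx hy
  rcases hmem x hx with rfl | rfl <;> rcases hmem y hy with rfl | rfl <;>
    simp [hb, hab, hab.symm, Zigzag]

lemma IsZigzagOn.extend_left {ℓ : ℕ} (ih : IsZigzagOn G (a + 1) (ℓ - 1) (ℓ - 2))
    (hℓ : 2 ≤ ℓ) (hℓn : ℓ < n)
    (hadj : ∀ y : Fin n, (y - a).val ≤ ℓ → (G.Adj a y ↔ (y - a).val = 1 ∨ (y - a).val = ℓ)) :
    IsZigzagOn G a ℓ ℓ := by
  have hshift : ∀ z : Fin n, 1 ≤ (z - a).val → (z - (a + 1)).val = (z - a).val - 1 := by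
    intro z hz
    rw [Fin.val_sub_eq_ite_sub a (a + 1) z, Fin.val_add_one_sub_self a (by omega), if_pos hz]
  have hzig0 : ∀ v, v ≤ ℓ → (Zigzag ℓ 0 v ↔ v = 1 ∨ v = ℓ) := by
    unfold Zigzag
    omega
  intro x y hx hy
  rcases Nat.eq_zero_or_pos (x - a).val with hx0 | hx0
  · rw [Fin.val_sub_eq_zero_iff.mp hx0, sub_self, Fin.val_zero, hzig0 _ hy]
    exact hadj y hy
  rcases Nat.eq_zero_or_pos (y - a).val with hy0 | hy0
  · rw [Fin.val_sub_eq_zero_iff.mp hy0, sub_self, Fin.val_zero, zigzag_comm, hzig0 _ hx,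
      adj_comm]
    exact hadj x hx
  have h := ih x y (by rw [hshift x hx0]; omega) (by rw [hshift y hy0]; omega)
  rw [hshift x hx0, hshift y hy0] at h
  rw [h]
  unfold Zigzag
  omega

lemma IsZigzagOn.extend_right {ℓ : ℕ} (ih : IsZigzagOn G a (ℓ - 1) (ℓ - 1))
    (hb : (b - a).val = ℓ) (hℓ : 1 ≤ ℓ)
    (hadj : ∀ x : Fin n, (x - a).val ≤ ℓ →
      (G.Adj x b ↔ (x - a).val = 0 ∨ (x - a).val = ℓ - 1)) :
    IsZigzagOn G a ℓ (ℓ - 1) := by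
  have hzigℓ : ∀ u, u ≤ ℓ → (Zigzag (ℓ - 1) u ℓ ↔ u = 0 ∨ u = ℓ - 1) := by
    unfold Zigzag
    omega
  intro x y hx hy
  by_cases hxb : (x - a).val = ℓ
  · by_cases hyb : (y - a).val = ℓ
    · rw [Fin.eq_of_val_sub_eq (hxb.trans hyb.symm), hyb]
      unfold Zigzag
      simp
    · rw [Fin.eq_of_val_sub_eq (hxb.trans hb.symm), hb, adj_comm, zigzag_comm, hzigℓ _ hy]
      exact hadj y hy
  by_cases hyb : (y - a).val = ℓ
  · rw [Fin.eq_of_val_sub_eq (hyb.trans hb.symm), hb, hzigℓ _ hx]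
    exact hadj x hx
  exact ih x y (by omega) (by omega)

lemma isZigzagOn_of_adj (hG : IsMOPFin n G) (hdeg : maxDeg G ≤ 4) (hab : G.Adj a b)
    (hbn : (b - a).val ≤ n - 2) :
    (OuterAdjLeft G a b → IsZigzagOn G a (b - a).val (b - a).val) ∧
    (OuterAdjRight G a b → IsZigzagOn G a (b - a).val ((b - a).val - 1)) := by
  induction hℓ : (b - a).val using Nat.strong_induction_on generalizing a b with
  | _ ℓ ih =>
  have hℓ0 : ℓ ≠ 0 := fun h => G.ne_of_adj hab (Fin.val_sub_eq_zero_iff.mp (hℓ.trans h)).symm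
  by_cases hℓ1 : ℓ = 1
  · subst hℓ1
    exact ⟨fun _ => isZigzagOn_one hab hℓ 1, fun _ => isZigzagOn_one hab hℓ 0⟩
  have ha1 := Fin.val_add_one_sub_self a (by omega)
  have hb1 : (b - 1 - a).val = ℓ - 1 := by rw [Fin.val_sub_one_sub, hℓ, if_neg hℓ0]
  obtain ⟨c, hc, hac, hcb⟩ := hG.exists_apex hab (by omega)
  constructor
  · intro hout
    rw [Fin.eq_of_val_sub_eq ((hout.val_sub_eq_one hG hdeg hab hc hac).trans ha1.symm)] at hcb
    have hb' : (b - (a + 1)).val = ℓ - 1 := by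
      rw [Fin.val_sub_eq_ite_sub a (a + 1) b, ha1, hℓ, if_pos (by omega)]
    have ha' : (a - (a + 1)).val = n - 1 := by
      rw [Fin.val_sub_eq_ite_sub a (a + 1) a, ha1, sub_self, Fin.val_zero, if_neg (by omega)]
      omega
    have hout' : OuterAdjRight G (a + 1) b := by
      refine ⟨a, hab.symm, fun h => ?_, fun h => ?_, fun h => ?_⟩
      · have := congrArg (fun x => (x - (a + 1)).val) h
        simp only [ha', hb', Fin.val_add_one_sub (a + 1) b] at this
        split_ifs at this <;> omega
      · have := congrArg (fun x => (x - a).val) h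
        simp only [sub_self, Fin.val_zero, ha1] at this
        omega
      · unfold StrictBtw at h
        omega
    have hzig := (ih (ℓ - 1) (by omega) hcb (by omega) hb').2 hout'
    rw [Nat.sub_sub] at hzig
    exact hzig.extend_left (by omega) (by omega)
      fun y hy => hℓ ▸ hout.adj_iff hG hdeg hab (hℓ ▸ hy)
  · intro hout
    rw [Fin.eq_of_val_sub_eq ((hout.val_sub_eq_pred hG hdeg hab hc hcb).trans
      (hℓ ▸ hb1).symm)] at hac
    have hout' : OuterAdjLeft G a (b - 1) := by
      refine ⟨b, hab, fun h => ?_, fun h => ?_, fun h => ?_⟩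
      · have := congrArg (fun x => (x - a).val) h
        simp only [hℓ, Fin.val_sub_one_sub_self] at this
        omega
      · have := congrArg (fun x => (x - a).val) h
        simp only [hℓ, hb1] at this
        omega
      · unfold StrictBtw at h
        omega
    exact ((ih (ℓ - 1) (by omega) hac (by omega) hb1).1 hout').extend_right hℓ (by omega)
      fun x hx => hℓ ▸ hout.adj_iff hG hdeg hab (by omega) (hℓ ▸ hx)

end Zigzag

/-- Offset from the ear `e` of the vertex of `G` playing the role of `vᵢ` in the straight linear
2-tree: `e, e + 1, e - 1, e + 2, e - 2, …`. -/
def spineOffset (n i : ℕ) : ℕ :=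
  if i = 0 then 0 else if i % 2 = 1 then (i + 1) / 2 else n - i / 2

section Spine

variable {n i j : ℕ}

lemma spineOffset_lt (hi : i < n) : spineOffset n i < n := by
  unfold spineOffset
  split_ifs <;> omega

lemma spineOffset_inj (hi : i < n) (hj : j < n) (h : spineOffset n i = spineOffset n j) :
    i = j := by
  unfold spineOffset at h
  split_ifs at h <;> omega

lemma spineOffset_eq_one_or_iff (hj : 0 < j) (hjn : j < n) :
    spineOffset n j = 1 ∨ spineOffset n j = n - 1 ↔ j ≤ 2 := by
  unfold spineOffset
  split_ifs <;> omega

lemma spineOffset_eq_zero_or_iff (hj : 1 < j) (hjn : j < n) :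
    spineOffset n j = 0 ∨ spineOffset n j = 2 ∨ spineOffset n j = n - 1 ↔ j ≤ 3 := by
  unfold spineOffset
  split_ifs <;> omega

lemma zigzag_spineOffset_iff (hi : 2 ≤ i) (hij : i < j) (hjn : j < n) :
    Zigzag (n - 4) (spineOffset n i - 2) (spineOffset n j - 2) ↔ j ≤ i + 2 := by
  unfold spineOffset Zigzag
  split_ifs <;> omega

end Spine

namespace IsMOPFin

variable {n : ℕ} [NeZero n] {G : SimpleGraph (Fin n)}

/-- Apart from `e` and `e + 1`, `G` is the zigzag on the arc from `e + 2` to `e - 1`, which the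
chord to `e + 1` saturates at `e - 1`. -/
lemma nonempty_iso_linear2Tree_of_ear_add_two (hG : IsMOPFin n G) (hdeg : maxDeg G ≤ 4) {e : Fin n}
    (he : G.Adj (e - 1) (e + 1)) (hc : G.Adj (e - 1) (e + 2)) :
    Nonempty (G ≃g linear2Tree n) := by
  have hn := hG.three_le
  have h1 := Fin.val_add_one_sub_self e (by omega)
  have h2 := Fin.val_add_two_sub_self e (by omega)
  have h3 := Fin.val_sub_one_sub_self e
  have hoff : ∀ z : Fin n, 2 ≤ (z - e).val → (z - (e + 2)).val = (z - e).val - 2 :=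
    fun z hz => by rw [Fin.val_sub_eq_ite_sub e (e + 2) z, h2, if_pos hz]
  have hout : OuterAdjRight G (e + 2) (e - 1) := by
    refine ⟨e + 1, he, fun h => ?_, fun h => ?_, fun h => ?_⟩
    · rw [sub_add_cancel] at h
      have := congrArg (fun x => (x - e).val) h
      simp only [h1, sub_self, Fin.val_zero] at this
      omega
    · have := congrArg (fun x => (x - e).val) h
      simp only [h1, h2] at this
      omega
    · unfold StrictBtw at h
      rw [Fin.val_sub_eq_ite_sub e (e + 2) (e + 1), hoff _ (by omega), h1, h2, h3,
        if_neg (by omega)] at h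
      omega
  have hzig := (isZigzagOn_of_adj hG hdeg hc.symm (by rw [hoff _ (by omega)]; omega)).2 hout
  rw [hoff _ (by omega), h3, show n - 1 - 2 - 1 = n - 4 by omega] at hzig
  set w : Fin n → Fin n := fun i => e + (spineOffset n i.val : Fin n)
  have hw : ∀ i, (w i - e).val = spineOffset n i.val := fun i =>
    Fin.val_add_natCast_sub e (spineOffset_lt i.isLt)
  refine nonempty_iso_linear2Tree_of_adj_iff (w := w)
    (fun i j hij => Fin.ext (spineOffset_inj i.isLt j.isLt (by rw [← hw, ← hw, hij])))
    fun i j hij => ?_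
  have hjn := j.isLt
  rcases Nat.lt_trichotomy i.val 1 with hi | hi | hi
  · rw [Fin.val_sub_eq_zero_iff.mp ((hw i).trans (by simp [spineOffset, Nat.lt_one_iff.mp hi])),
      hG.adj_iff_of_ear he, hw, spineOffset_eq_one_or_iff (by omega) hjn]
    omega
  · rw [Fin.eq_of_val_sub_eq ((hw i).trans (by simp [spineOffset, hi]; exact h1.symm)),
      hG.adj_add_one_iff_of_ear he hc, hw, spineOffset_eq_zero_or_iff (by omega) hjn]
    omega
  · have hwc : ∀ k : Fin n, 2 ≤ k.val → (w k - (e + 2)).val = spineOffset n k.val - 2 := by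
      intro k hk
      rw [hoff _ (by rw [hw]; unfold spineOffset; split_ifs <;> omega), hw]
    have hle : ∀ k : Fin n, spineOffset n k.val - 2 ≤ n - 1 - 2 := fun k =>
      Nat.sub_le_sub_right (Nat.le_sub_one_of_lt (spineOffset_lt k.isLt)) 2
    rw [hzig (w i) (w j) (hwc i hi ▸ hle i) (hwc j (by omega) ▸ hle j), hwc i hi,
      hwc j (by omega), zigzag_spineOffset_iff hi hij hjn]

lemma nonempty_iso_linear2Tree_of_ear_sub_two (hG : IsMOPFin n G) (hdeg : maxDeg G ≤ 4)
    {e : Fin n} (he : G.Adj (e - 1) (e + 1)) (hc : G.Adj (e + 1) (e - 1 - 1)) :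
    Nonempty (G ≃g linear2Tree n) := by
  let ι := Iso.comap (Equiv.neg (Fin n)) G
  obtain ⟨f⟩ := hG.comap_neg.nonempty_iso_linear2Tree_of_ear_add_two (e := -e)
    ((maxDeg_eq_of_iso ι).trans_le hdeg)
    (by
      change G.Adj (-(-e - 1)) (-(-e + 1))
      rw [show -(-e - 1) = e + 1 by abel, show -(-e + 1) = e - 1 by abel]
      exact he.symm)
    (by
      change G.Adj (-(-e - 1)) (-(-e + 2))
      rwa [show -(-e - 1) = e + 1 by abel, show -(-e + 2) = e - 1 - 1 by grind])
  exact ⟨ι.symm.trans f⟩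

/-- Going around the internal triangle, `Δ ≤ 4` pins down the apex on each of its sides in turn,
until `e - 1` is left with five neighbours. -/
lemma false_of_internal_triangle (hG : IsMOPFin n G) (hdeg : maxDeg G ≤ 4) (hn : 7 ≤ n)
    {e c : Fin n} (he : G.Adj (e - 1) (e + 1)) (hc₁ : G.Adj (e + 1) c) (hc₂ : G.Adj c (e - 1))
    (hc : 3 ≤ (c - e).val) (hc' : (c - e).val ≤ n - 3) : False := by
  have h0 : (e - e).val = 0 := by simp
  have h1 := Fin.val_add_one_sub_self e (by omega)
  have h2 : (e + 1 + 1 - e).val = 2 := by rw [Fin.val_add_one_sub, h1, if_neg (by omega)]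
  have hm1 := Fin.val_sub_one_sub_self e
  have hm2 : (e - 1 - 1 - e).val = n - 2 := by
    rw [Fin.val_sub_one_sub, hm1, if_neg (by omega)]
    omega
  have hoff : ∀ x y : Fin n, (x - e).val ≤ (y - e).val →
      (y - x).val = (y - e).val - (x - e).val := fun x y h => by
    rw [Fin.val_sub_eq_ite_sub e x y, if_pos h]
  have hqc := hoff (e + 1) c (by omega)
  obtain ⟨d, ⟨hd₀, hd⟩, hqd, hdc⟩ := hG.exists_apex hc₁ (by omega)
  have hdn := (d - e).isLt
  simp only [Fin.val_sub_eq_ite_sub e (e + 1) d, h1, hqc] at hd₀ hd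
  have hd2 : (d - e).val = 2 := by
    by_contra hd2
    split_ifs at hd₀ hd <;>
      exact false_of_five_adj hdeg e (hG.adj_add_one e).symm (hG.adj_add_one (e + 1)) hqd hc₁
        he.symm (by omega) (by omega) (by omega) (by omega)
  have hc3 : (c - e).val = 3 := by
    by_contra hc3
    have := Fin.val_add_one_sub e c
    have := Fin.val_sub_one_sub e c
    split_ifs at * <;>
      exact false_of_five_adj hdeg e hc₁.symm hdc.symm (hG.adj_sub_one c).symm
        (hG.adj_add_one c) hc₂ (by omega) (by omega) (by omega) (by omega)
  have hcp := hoff c (e - 1) (by omega)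
  obtain ⟨f, ⟨hf₀, hf⟩, hcf, hfp⟩ := hG.exists_apex hc₂ (by omega)
  have hfn := (f - e).isLt
  simp only [Fin.val_sub_eq_ite_sub e c f, hcp] at hf₀ hf
  have hc4 : (c + 1 - e).val = 4 := by rw [Fin.val_add_one_sub, if_neg (by omega), hc3]
  have hf4 : (f - e).val = 4 := by
    by_contra hf4
    split_ifs at hf₀ hf <;>
      exact false_of_five_adj hdeg e hc₁.symm hdc.symm (hG.adj_add_one c) hcf hc₂
        (by omega) (by omega) (by omega) (by omega)
  exact false_of_five_adj hdeg e (hG.adj_sub_one e) he hc₂.symm hfp.symm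
    (hG.adj_sub_one (e - 1)).symm (by omega) (by omega) (by omega) (by omega)

lemma nonempty_iso_linear2Tree (hG : IsMOPFin n G) (hn : 7 ≤ n) (hdeg : maxDeg G ≤ 4) :
    Nonempty (G ≃g linear2Tree n) := by
  obtain ⟨e, he⟩ := hG.exists_ear
  have h1 := Fin.val_add_one_sub_self e (by omega)
  have hm1 := Fin.val_sub_one_sub_self e
  have hpq : (e - 1 - (e + 1)).val = n - 2 := by
    rw [Fin.val_sub_eq_ite_sub e (e + 1) (e - 1), h1, hm1, if_pos (by omega)]
    omega
  obtain ⟨c, ⟨hc₀, hc⟩, hqc, hcp⟩ := hG.exists_apex he.symm (by omega)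
  have hcn := (c - e).isLt
  simp only [Fin.val_sub_eq_ite_sub e (e + 1) c, h1, hpq] at hc₀ hc
  have hc2 : 2 ≤ (c - e).val ∧ (c - e).val ≤ n - 2 := by
    split_ifs at hc₀ hc <;> omega
  by_cases hce : (c - e).val = 2
  · rw [Fin.eq_of_val_sub_eq (hce.trans (Fin.val_add_two_sub_self e (by omega)).symm)] at hcp
    exact hG.nonempty_iso_linear2Tree_of_ear_add_two hdeg he hcp.symm
  by_cases hce' : (c - e).val = n - 2
  · have hc : c = e - 1 - 1 := Fin.eq_of_val_sub_eq (a := e) (by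
      rw [hce', Fin.val_sub_one_sub, hm1, if_neg (by omega)]
      omega)
    exact hG.nonempty_iso_linear2Tree_of_ear_sub_two hdeg he (hc ▸ hqc)
  exact (hG.false_of_internal_triangle hdeg hn he hqc hcp (by omega) (by omega)).elim

end IsMOPFin

/-- A maximal outerplanar graph of order `n ≥ 7` has maximum
degree 4 if and only if it is isomorphic to the straight linear 2-tree. -/
theorem stmt_10 (n : ℕ) [NeZero n] (hn : 7 ≤ n) (G : SimpleGraph (Fin n))
    (hG : IsMOPFin n G) :
    maxDeg G = 4 ↔ Nonempty (G ≃g linear2Tree n) := by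
  refine ⟨fun hdeg => hG.nonempty_iso_linear2Tree hn hdeg.le, fun ⟨f⟩ => ?_⟩
  rw [maxDeg_eq_of_iso f, maxDeg_linear2Tree (by omega)]
end

section
/- Let G_n be the straight linear 2-tree on n ≥ 5 vertices. Then gp(G_n) = 3. -/
open SimpleGraph

/-! Distances in the linear 2-tree are `⌈|i - j| / 2⌉`, so for `u < v < w` the vertex `v` lies
on a `u`–`w` geodesic unless both gaps `v - u` and `w - v` are odd. If a general position set
contained `a < b < c < d`, the triples `a b c` and `a c d` would make `b - a`, `c - b` and
`c - a` all odd, which is impossible. Conversely, any triangle is in general position. -/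

lemma IsGPSet.of_isClique {V : Type*} {G : SimpleGraph V} {S : Set V} (hS : G.IsClique S) :
    IsGPSet G S := by
  intro u v w hu hv hw huv hvw huw
  rw [dist_eq_one_iff_adj.mpr (hS hu hw huw), dist_eq_one_iff_adj.mpr (hS hu hv huv),
    dist_eq_one_iff_adj.mpr (hS hv hw hvw)]
  decide

lemma gpNumber_eq_of_isGPSet {V : Type*} {G : SimpleGraph V} {S : Set V} {k : ℕ}
    (hS : IsGPSet G S) (hk : S.ncard = k) (hle : ∀ T : Set V, IsGPSet G T → T.ncard ≤ k) :
    gpNumber G = k :=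
  IsGreatest.csSup_eq ⟨⟨S, hS, hk⟩, by rintro _ ⟨T, hT, rfl⟩; exact hle T hT⟩

namespace linear2Tree

variable {n : ℕ}

lemma adj_iff {i j : Fin n} :
    (linear2Tree n).Adj i j ↔ i.val ≠ j.val ∧ i.val ≤ j.val + 2 ∧ j.val ≤ i.val + 2 :=
  and_congr_left' Fin.val_ne_iff.symm

lemma le_add_two_mul_length {i j : Fin n} (p : (linear2Tree n).Walk i j) :
    j.val ≤ i.val + 2 * p.length := by
  induction p with
  | nil => simp
  | cons h _ ih =>
    have := (adj_iff.mp h).2.2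
    rw [Walk.length_cons]
    omega

lemma exists_walk_two_mul_length_le {i j : Fin n} (hij : i ≤ j) :
    ∃ p : (linear2Tree n).Walk i j, 2 * p.length ≤ j.val - i.val + 1 := by
  obtain ⟨j, hj⟩ := j
  induction j using Nat.strong_induction_on with
  | _ j ih =>
    change i.val ≤ j at hij
    by_cases hji : j = i.val
    · subst hji
      exact ⟨.nil, by simp⟩
    by_cases hnear : j ≤ i.val + 2
    · have hadj : (linear2Tree n).Adj i ⟨j, hj⟩ :=
        adj_iff.mpr (show i.val ≠ j ∧ i.val ≤ j + 2 ∧ j ≤ i.val + 2 by omega)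
      exact ⟨hadj.toWalk, by simp; omega⟩
    · obtain ⟨p, hp⟩ :=
        ih (j - 2) (by omega) (by omega) (Fin.le_def.mpr (show i.val ≤ j - 2 by omega))
      have hadj : (linear2Tree n).Adj ⟨j - 2, by omega⟩ ⟨j, hj⟩ :=
        adj_iff.mpr (show j - 2 ≠ j ∧ j - 2 ≤ j + 2 ∧ j ≤ j - 2 + 2 by omega)
      exact ⟨p.concat hadj, by simp at hp ⊢; omega⟩

lemma dist_of_le {i j : Fin n} (hij : i ≤ j) :
    (linear2Tree n).dist i j = (j.val - i.val + 1) / 2 := by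
  obtain ⟨p, hp⟩ := exists_walk_two_mul_length_le hij
  obtain ⟨q, hq⟩ := Reachable.exists_walk_length_eq_dist ⟨p⟩
  have hlower := le_add_two_mul_length q
  have hupper := dist_le p
  omega

lemma dist_eq_dist_add_dist_iff {u v w : Fin n} (huv : u ≤ v) (hvw : v ≤ w) :
    (linear2Tree n).dist u w = (linear2Tree n).dist u v + (linear2Tree n).dist v w ↔
      Even (v.val - u.val) ∨ Even (w.val - v.val) := by
  rw [dist_of_le huv, dist_of_le hvw, dist_of_le (huv.trans hvw), Nat.even_iff, Nat.even_iff]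
  rw [Fin.le_def] at huv hvw
  omega

lemma odd_sub_of_isGPSet {S : Set (Fin n)} (hS : IsGPSet (linear2Tree n) S) {u v w : Fin n}
    (hu : u ∈ S) (hv : v ∈ S) (hw : w ∈ S) (huv : u < v) (hvw : v < w) :
    Odd (v.val - u.val) ∧ Odd (w.val - v.val) := by
  have h := hS hu hv hw huv.ne hvw.ne (huv.trans hvw).ne
  rwa [Ne, dist_eq_dist_add_dist_iff huv.le hvw.le, not_or, Nat.not_even_iff_odd,
    Nat.not_even_iff_odd] at h

lemma ncard_le_three_of_isGPSet {S : Set (Fin n)} (hS : IsGPSet (linear2Tree n) S) :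
    S.ncard ≤ 3 := by
  classical
  by_contra! h4
  rw [Set.ncard_eq_toFinset_card'] at h4
  let f := S.toFinset.orderEmbOfFin rfl
  let a : Fin 4 → Fin n := fun i => f (Fin.castLE h4 i)
  have ha : ∀ i, a i ∈ S := fun i => Set.mem_toFinset.mp (S.toFinset.orderEmbOfFin_mem rfl _)
  have hmono : StrictMono a := f.strictMono.comp (Fin.strictMono_castLE h4)
  have h01 := hmono (show (0 : Fin 4) < 1 by decide)
  have h12 := hmono (show (1 : Fin 4) < 2 by decide)
  have h23 := hmono (show (2 : Fin 4) < 3 by decide)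
  obtain ⟨hodd01, hodd12⟩ := odd_sub_of_isGPSet hS (ha 0) (ha 1) (ha 2) h01 h12
  obtain ⟨hodd02, -⟩ := odd_sub_of_isGPSet hS (ha 0) (ha 2) (ha 3) (h01.trans h12) h23
  rw [Fin.lt_def] at h01 h12
  rw [Nat.odd_iff] at hodd01 hodd12 hodd02
  omega

lemma isClique_range_castLE (h : 3 ≤ n) :
    (linear2Tree n).IsClique (Set.range (Fin.castLE h)) := by
  rintro _ ⟨i, rfl⟩ _ ⟨j, rfl⟩ hij
  have := i.isLt
  have := j.isLt
  exact adj_iff.mpr ⟨Fin.val_ne_iff.mpr hij, by simp; omega, by simp; omega⟩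

end linear2Tree

/-- The straight linear 2-tree on `n ≥ 5` vertices has general
position number 3. -/
theorem stmt_11 (n : ℕ) (hn : 5 ≤ n) :
    gpNumber (linear2Tree n) = 3 := by
  have h3 : 3 ≤ n := by omega
  refine gpNumber_eq_of_isGPSet (.of_isClique (linear2Tree.isClique_range_castLE h3)) ?_
    fun _ => linear2Tree.ncard_le_three_of_isGPSet
  rw [Set.ncard_range_of_injective (Fin.castLE_injective h3), Nat.card_eq_fintype_card,
    Fintype.card_fin]
end

section
/- Let G be a connected graph and S a general position set of G. Then every connected component of the subgraph induced by S is a complete graph. -/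
open SimpleGraph

/-! Two `S`-neighbours `a ~ b ~ c` with `a ≠ c` are at distance 1 or 2, and distance 2 would put
`b` on an `a`–`c` geodesic. So adjacency in `G[S]` is transitive on distinct vertices, which
makes every component of `G[S]` a clique. -/

theorem SimpleGraph.Reachable.eq_or_adj_of_adj_trans {W : Type*} {H : SimpleGraph W}
    (htrans : ∀ ⦃a b c : W⦄, H.Adj a b → H.Adj b c → a ≠ c → H.Adj a c)
    {u v : W} (huv : H.Reachable u v) : u = v ∨ H.Adj u v := by
  obtain ⟨p⟩ := huv
  induction p with
  | nil => exact Or.inl rfl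
  | @cons a b c hab _ ih =>
    rcases ih with rfl | hbc
    · exact Or.inr hab
    · by_cases hac : a = c
      · exact Or.inl hac
      · exact Or.inr (htrans hab hbc hac)

theorem IsGPSet.adj_of_adj_of_adj_s16 {V : Type*} {G : SimpleGraph V} {S : Set V}
    (hS : IsGPSet G S) {a b c : V} (ha : a ∈ S) (hb : b ∈ S) (hc : c ∈ S)
    (hab : G.Adj a b) (hbc : G.Adj b c) (hac : a ≠ c) : G.Adj a c := by
  have hle : G.dist a c ≤ 2 := G.dist_le (.cons hab (.cons hbc .nil))
  have hpos : 0 < G.dist a c := (hab.reachable.trans hbc.reachable).pos_dist_of_ne hac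
  have hgeo := hS ha hb hc hab.ne hbc.ne hac
  rw [dist_eq_one_iff_adj.mpr hab, dist_eq_one_iff_adj.mpr hbc] at hgeo
  exact dist_eq_one_iff_adj.mp (by omega)

theorem stmt_16_general {V : Type*} (G : SimpleGraph V)
    (S : Set V) (hS : IsGPSet G S) :
    ∀ u v : S, (G.induce S).Reachable u v → u = v ∨ (G.induce S).Adj u v :=
  fun _ _ => Reachable.eq_or_adj_of_adj_trans fun (a b c : S) hab hbc hac =>
    hS.adj_of_adj_of_adj_s16 a.2 b.2 c.2 hab hbc (Subtype.coe_ne_coe.mpr hac)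

/-- Every connected component of the subgraph induced by a
general position set of a connected graph is a complete graph. -/
theorem stmt_16 {V : Type*} (G : SimpleGraph V) (hconn : G.Connected)
    (S : Set V) (hS : IsGPSet G S) :
    ∀ u v : S, (G.induce S).Reachable u v → u = v ∨ (G.induce S).Adj u v :=
  stmt_16_general G S hS
end
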